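/- arXiv:1506.03798 — 7 statements merged into one kernel-verified Lean document; each statement's English description precedes it below -/
import Mathlib

section
/- If w is a permutation of {1,...,n}, 1 < i < n, and d_i(w) ≠ w, then the inverse descent signatures of w and x = d_i(w) satisfy: σ(w)_{i-1} = -σ(x)_{i-1}, σ(w)_i = -σ(x)_i, and σ(w)_h = σ(x)_h for all h with h < i-2 or h > i+1. -/
/-!  Permutations of `{1,…,n}` are modelled as `Equiv.Perm (Fin n)` with 0-based
values: the value `v : Fin n` stands for the paper's value `v+1`, and
`w.symm v` is the position of the value `v` in one-line notation.
`dmove n i` is the paper's elementary dual equivalence involution `d_{i+1}`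
(so `i` ranges over `1 ≤ i` and `i + 1 < n`, matching the paper's `1 < i+1 < n`),
and `dtmove n i` is the twisted move `d̃_{i+1}`. -/

/-- Haiman's elementary dual equivalence move: if the position of the middle
value `i` lies between the positions of `i-1` and `i+1`, do nothing; otherwise
interchange the value `i` with whichever of `i-1, i+1` is positioned further
from it. -/
def dmove (n : ℕ) (i : ℕ) (w : Equiv.Perm (Fin n)) : Equiv.Perm (Fin n) :=
  if h : 1 ≤ i ∧ i + 1 < n then
    let a : Fin n := ⟨i - 1, by omega⟩
    let b : Fin n := ⟨i, by omega⟩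
    let c : Fin n := ⟨i + 1, by omega⟩
    let pa := w.symm a
    let pb := w.symm b
    let pc := w.symm c
    if (pa < pb ∧ pb < pc) ∨ (pc < pb ∧ pb < pa) then w
    else if pb < pa ∧ pb < pc then
      (if pa < pc then Equiv.swap c b else Equiv.swap a b) * w
    else
      (if pa < pc then Equiv.swap a b else Equiv.swap c b) * w
  else w

/-- The twisted elementary dual equivalence move: if the position of the middle
value `i` lies between those of `i-1` and `i+1`, do nothing; otherwise
cyclically rotate the three values `i-1, i, i+1` so that `i` moves to the
other side of `i-1` and `i+1`, the outer two keeping their relative order. -/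
def dtmove (n : ℕ) (i : ℕ) (w : Equiv.Perm (Fin n)) : Equiv.Perm (Fin n) :=
  if h : 1 ≤ i ∧ i + 1 < n then
    let a : Fin n := ⟨i - 1, by omega⟩
    let b : Fin n := ⟨i, by omega⟩
    let c : Fin n := ⟨i + 1, by omega⟩
    let pa := w.symm a
    let pb := w.symm b
    let pc := w.symm c
    let u := if pa < pc then a else c   -- the outer value occurring first
    let v := if pa < pc then c else a   -- the outer value occurring last
    if (pa < pb ∧ pb < pc) ∨ (pc < pb ∧ pb < pa) then w
    else if pb < pa ∧ pb < pc then
      (Equiv.swap b u * Equiv.swap u v) * w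
    else
      (Equiv.swap u b * Equiv.swap b v) * w
  else w

/-- The inverse descent signature: `sig n w j = +1` if the (0-based) value `j`
occurs to the left of the value `j+1` in the one-line notation of `w`, and `-1`
otherwise.  (`sig n w (j-1)` is the paper's `σ(w)_j`.) -/
def sig (n : ℕ) (w : Equiv.Perm (Fin n)) (j : ℕ) : ℤ :=
  if h : j + 1 < n then
    if w.symm ⟨j, by omega⟩ < w.symm ⟨j + 1, h⟩ then 1 else -1
  else 1

/-! A move that changes `w` exchanges the middle value `i` with the outer value `u` positioned
further from it, so the other outer value `v` lies between them. Exchanging the two ends of three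
values reverses all their pairwise orders, so the signature flips at the two pairs `(i-1, i)` and
`(i, i+1)`, while the pairs `(h, h+1)` disjoint from `{i-1, i, i+1}` keep their positions. -/

namespace Equiv.Perm

variable {α : Type*}

lemma symm_swap_mul_apply [DecidableEq α] (u b : α) (w : Perm α) (t : α) :
    (swap u b * w).symm t = w.symm (swap u b t) := by
  simp [mul_def]

lemma symm_swap_mul_lt_iff [LinearOrder α] {u v b : α} {w : Perm α}
    (hv : w.symm b < w.symm v ∧ w.symm v < w.symm u ∨ w.symm u < w.symm v ∧ w.symm v < w.symm b)
    {s t : α} (hs : s = u ∨ s = v ∨ s = b) (ht : t = u ∨ t = v ∨ t = b) (hst : s ≠ t) :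
    (swap u b * w).symm s < (swap u b * w).symm t ↔ w.symm t < w.symm s := by
  have huv : u ≠ v := by rintro rfl; rcases hv with hv | hv <;> order
  have hvb : v ≠ b := by rintro rfl; rcases hv with hv | hv <;> order
  simp only [symm_swap_mul_apply]
  rcases hs with rfl | rfl | rfl <;> rcases ht with rfl | rfl | rfl <;>
    simp only [swap_apply_left, swap_apply_right, swap_apply_of_ne_of_ne huv.symm hvb, ne_eq,
      not_true_eq_false] at hst ⊢ <;>
    rcases hv with hv | hv <;> constructor <;> intro <;> order

end Equiv.Perm

section Signature

variable {n : ℕ}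

lemma sig_eq_ite (w : Equiv.Perm (Fin n)) {j : ℕ} (hj : j + 1 < n) {s t : Fin n}
    (hs : s.val = j) (ht : t.val = j + 1) :
    sig n w j = if w.symm s < w.symm t then 1 else -1 := by
  obtain ⟨j, _⟩ := s
  obtain ⟨_, _⟩ := t
  subst hs ht
  rw [sig, dif_pos hj]

lemma sig_eq_neg_of_lt_iff {w x : Equiv.Perm (Fin n)} {j : ℕ} (hj : j + 1 < n) {s t : Fin n}
    (hs : s.val = j) (ht : t.val = j + 1) (h : x.symm s < x.symm t ↔ w.symm t < w.symm s) :
    sig n w j = -sig n x j := by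
  have hne : w.symm s ≠ w.symm t := w.symm.injective.ne (Fin.ne_of_val_ne (by omega))
  rw [sig_eq_ite w hj hs ht, sig_eq_ite x hj hs ht]
  split_ifs <;> first | rfl | omega

lemma sig_swap_mul {u b : Fin n} {j : ℕ} (hu : u.val ≠ j ∧ u.val ≠ j + 1)
    (hb : b.val ≠ j ∧ b.val ≠ j + 1) (w : Equiv.Perm (Fin n)) :
    sig n (Equiv.swap u b * w) j = sig n w j := by
  unfold sig
  split
  · simp only [Equiv.Perm.symm_swap_mul_apply]
    rw [Equiv.swap_apply_of_ne_of_ne, Equiv.swap_apply_of_ne_of_ne] <;>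
      simp only [ne_eq, Fin.ext_iff] <;> omega
  · rfl

end Signature

lemma dmove_eq_swap_mul {n i : ℕ} (hi : 1 ≤ i) (hin : i + 1 < n) {w : Equiv.Perm (Fin n)}
    (hx : dmove n i w ≠ w) :
    ∃ u v : Fin n, (u.val = i - 1 ∧ v.val = i + 1 ∨ u.val = i + 1 ∧ v.val = i - 1) ∧
      (w.symm ⟨i, by omega⟩ < w.symm v ∧ w.symm v < w.symm u ∨
        w.symm u < w.symm v ∧ w.symm v < w.symm ⟨i, by omega⟩) ∧
      dmove n i w = Equiv.swap u ⟨i, by omega⟩ * w := by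
  have hne : ∀ s t : Fin n, s.val ≠ t.val → w.symm s ≠ w.symm t := fun s t h e =>
    h (congrArg Fin.val (w.symm.injective e))
  have hab := hne ⟨i - 1, by omega⟩ ⟨i, by omega⟩ (by simp only; omega)
  have hbc := hne ⟨i, by omega⟩ ⟨i + 1, by omega⟩ (by simp only; omega)
  have hac := hne ⟨i - 1, by omega⟩ ⟨i + 1, by omega⟩ (by simp only; omega)
  unfold dmove at hx ⊢
  rw [dif_pos ⟨hi, hin⟩] at hx ⊢
  dsimp only at hx ⊢
  split_ifs at hx ⊢
  · exact absurd rfl hx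
  · exact ⟨⟨i + 1, hin⟩, ⟨i - 1, by omega⟩, .inr ⟨rfl, rfl⟩, by omega, rfl⟩
  · exact ⟨⟨i - 1, by omega⟩, ⟨i + 1, hin⟩, .inl ⟨rfl, rfl⟩, by omega, rfl⟩
  · exact ⟨⟨i - 1, by omega⟩, ⟨i + 1, hin⟩, .inl ⟨rfl, rfl⟩, by omega, rfl⟩
  · exact ⟨⟨i + 1, hin⟩, ⟨i - 1, by omega⟩, .inr ⟨rfl, rfl⟩, by omega, rfl⟩

/-- if `x = d_i(w) ≠ w`, then the inverse descent signatures
satisfy `σ(w)_{i-1} = -σ(x)_{i-1}`, `σ(w)_i = -σ(x)_i`, and `σ(w)_h = σ(x)_h`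
for `h < i-2` and `h > i+1`.  (With our 0-based middle value `i`, the paper's
`σ_{i-1}, σ_i` are `sig n _ (i-1), sig n _ i`, and the preserved indices `h`
are those with `h + 3 ≤ i` or `i + 2 ≤ h`.) -/
theorem dmove_signature (n i : ℕ) (hi : 1 ≤ i) (hin : i + 1 < n)
    (w : Equiv.Perm (Fin n)) (hx : dmove n i w ≠ w) :
    sig n w (i - 1) = -sig n (dmove n i w) (i - 1) ∧
    sig n w i = -sig n (dmove n i w) i ∧
    ∀ h : ℕ, (h + 3 ≤ i ∨ i + 2 ≤ h) → sig n w h = sig n (dmove n i w) h := by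
  obtain ⟨u, v, huv, hv, hd⟩ := dmove_eq_swap_mul hi hin hx
  set b : Fin n := ⟨i, by omega⟩
  have hb : b.val = i := rfl
  have htriple : ∀ s : Fin n, i - 1 ≤ s.val → s.val ≤ i + 1 → s = u ∨ s = v ∨ s = b := by
    intro s hs₁ hs₂
    simp only [Fin.ext_iff]
    omega
  have hreverse : ∀ {s t : Fin n}, i - 1 ≤ s.val → t.val ≤ i + 1 → s.val + 1 = t.val →
      ((Equiv.swap u b * w).symm s < (Equiv.swap u b * w).symm t ↔ w.symm t < w.symm s) :=
    fun hs ht hst => Equiv.Perm.symm_swap_mul_lt_iff hv (htriple _ hs (by omega))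
      (htriple _ (by omega) ht) (Fin.ne_of_val_ne (by omega))
  rw [hd]
  refine ⟨?_, ?_, fun h hh => ?_⟩
  · exact sig_eq_neg_of_lt_iff (s := ⟨i - 1, by omega⟩) (j := i - 1) (by omega) rfl (by omega)
      (hreverse (t := b) le_rfl (by omega) (by simp only; omega))
  · exact sig_eq_neg_of_lt_iff (t := ⟨i + 1, hin⟩) hin hb rfl (hreverse (by omega) le_rfl rfl)
  · exact (sig_swap_mul (by omega) (by omega) w).symm
end

section
/- For a permutation w of {1,...,n} and 1 < i < n: d_i(w) ≠ w if and only if σ(w)_{i-1} = -σ(w)_i, where σ is the inverse descent signature. Equivalently, d_i fixes w exactly when i-1 and i+1 lie on the same side of i in the inverse descent sense. -/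
/-! `d_i` fixes `w` exactly when the position of `i` lies strictly between those of `i-1` and
`i+1` (otherwise it multiplies `w` by a transposition of two distinct values). As the three
positions are distinct, this betweenness says that the comparisons recorded by `σ(w)_{i-1}` and
`σ(w)_i` agree. -/

theorem lt_and_lt_or_lt_and_lt_iff {α : Type*} [LinearOrder α] {a b c : α}
    (hab : a ≠ b) (hcb : c ≠ b) : (a < b ∧ b < c) ∨ (c < b ∧ b < a) ↔ (a < b ↔ b < c) := by
  rcases hab.lt_or_gt with hab | hab <;> rcases hcb.lt_or_gt with hcb | hcb <;>
    simp [hab, hcb, hab.not_gt, hcb.not_gt]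

theorem ite_one_neg_one_eq_neg_iff (p q : Prop) [Decidable p] [Decidable q] :
    ((if p then 1 else -1 : ℤ) = -(if q then 1 else -1)) ↔ ¬(p ↔ q) := by
  split_ifs <;> simp_all

theorem sig_of_lt {n : ℕ} (w : Equiv.Perm (Fin n)) {j : ℕ} (h : j + 1 < n) :
    sig n w j = if w.symm ⟨j, by omega⟩ < w.symm ⟨j + 1, h⟩ then 1 else -1 :=
  dif_pos h

theorem sig_pred {n i : ℕ} (w : Equiv.Perm (Fin n)) (hi : 1 ≤ i) (hin : i + 1 < n) :
    sig n w (i - 1) = if w.symm ⟨i - 1, by omega⟩ < w.symm ⟨i, by omega⟩ then 1 else -1 := by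
  obtain ⟨j, rfl⟩ : ∃ j, i = j + 1 := ⟨i - 1, by omega⟩
  exact sig_of_lt w (by omega)

theorem dmove_eq_self_iff {n i : ℕ} (hi : 1 ≤ i) (hin : i + 1 < n) (w : Equiv.Perm (Fin n)) :
    dmove n i w = w ↔
      (w.symm ⟨i - 1, by omega⟩ < w.symm ⟨i, by omega⟩ ∧
          w.symm ⟨i, by omega⟩ < w.symm ⟨i + 1, hin⟩) ∨
        (w.symm ⟨i + 1, hin⟩ < w.symm ⟨i, by omega⟩ ∧
          w.symm ⟨i, by omega⟩ < w.symm ⟨i - 1, by omega⟩) := by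
  have hab : (⟨i - 1, by omega⟩ : Fin n) ≠ ⟨i, by omega⟩ := by simp; omega
  have hcb : (⟨i + 1, hin⟩ : Fin n) ≠ ⟨i, by omega⟩ := by simp
  unfold dmove
  rw [dif_pos ⟨hi, hin⟩]
  dsimp only
  split_ifs <;> simp_all

/-- `d_i(w) ≠ w` if and only if `σ(w)_{i-1} = -σ(w)_i`. -/
theorem dmove_fixed_iff (n i : ℕ) (hi : 1 ≤ i) (hin : i + 1 < n)
    (w : Equiv.Perm (Fin n)) :
    dmove n i w ≠ w ↔ sig n w (i - 1) = -sig n w i := by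
  have hab : w.symm ⟨i - 1, by omega⟩ ≠ w.symm ⟨i, by omega⟩ := by simp; omega
  have hcb : w.symm ⟨i + 1, hin⟩ ≠ w.symm ⟨i, by omega⟩ := by simp
  rw [ne_eq, dmove_eq_self_iff hi hin, lt_and_lt_or_lt_and_lt_iff hab hcb, sig_pred w hi hin,
    sig_of_lt w hin, ite_one_neg_one_eq_neg_iff]
end

section
/- Every standard Young tableau T of partition shape λ of size n satisfies α(T) ≤ λ in dominance order, where α(T) is the composition of n determined by the descent set of T; moreover α(T) = λ (as a composition equal to the partition λ) if and only if T is the superstandard tableau T_λ. -/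
/-!  Standard Young tableaux are modelled as functions `T : ℕ × ℕ → ℕ`
(cells `(row, col)` in English notation) that vanish outside the diagram and
restrict to a bijection from the cells onto `{1,…,n}`, increasing along rows
and columns.  A descent of `T` is an `i` such that `i+1` lies in a strictly
lower row (larger row index) than `i`. -/

/-- `T` is a standard Young tableau of shape `μ`. -/
def IsStandardYT (μ : YoungDiagram) (T : ℕ × ℕ → ℕ) : Prop :=
  Set.BijOn T ↑μ.cells (Set.Icc 1 μ.cells.card) ∧
  (∀ c : ℕ × ℕ, c ∉ μ.cells → T c = 0) ∧
  (∀ r c : ℕ, (r, c) ∈ μ.cells → (r, c + 1) ∈ μ.cells → T (r, c) < T (r, c + 1)) ∧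
  (∀ r c : ℕ, (r, c) ∈ μ.cells → (r + 1, c) ∈ μ.cells → T (r, c) < T (r + 1, c))

open Classical in
/-- The descent set of a standard Young tableau: those `i ∈ [n-1]` such that
`i + 1` lies in a strictly lower row than `i`. -/
noncomputable def DesY (μ : YoungDiagram) (T : ℕ × ℕ → ℕ) : Finset ℕ :=
  (Finset.Icc 1 (μ.cells.card - 1)).filter fun i =>
    ∃ c1 ∈ μ.cells, ∃ c2 ∈ μ.cells, T c1 = i ∧ T c2 = i + 1 ∧ c1.1 < c2.1

/-- `α₁ + ⋯ + α_k` for the descent composition `α(T)` of a standard tableau of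
size `n`: the `k`-th smallest element of `Des(T) ∪ {n}` (equal to `n` for `k`
beyond the number of parts). -/
noncomputable def alphaPartial (μ : YoungDiagram) (T : ℕ × ℕ → ℕ) (k : ℕ) : ℕ :=
  ((insert μ.cells.card (DesY μ T)).sort (· ≤ ·)).getD (k - 1) μ.cells.card

/-- `λ₁ + ⋯ + λ_k` for the partition `λ`, i.e. the number of cells in the
first `k` rows. -/
def rowPartial (μ : YoungDiagram) (k : ℕ) : ℕ :=
  (μ.cells.filter fun c => c.1 < k).card

/-! The row of an entry `v` of a standard tableau is at most the number of descents below `v`: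
walking up a column, each step goes from a larger entry in a lower row to a smaller entry in a
higher row, and between the two values some consecutive pair `i, i + 1` must change row upward,
i.e. form a descent. If `α₁ + ⋯ + α_k = a`, fewer than `k` elements of `Des(T) ∪ {n}` lie below
`a`, so the entries `1, …, a` all sit in the first `k` rows and `a ≤ λ₁ + ⋯ + λ_k`.
In the equality case the first `k` rows hold exactly the entries `1, …, λ₁ + ⋯ + λ_k` for every
`k`, which forces each row to be filled with consecutive values; conversely the descents of `T_λ`
are among the row ends `λ₁ + ⋯ + λ_j`. -/

open Finset

theorem Finset.card_filter_lt_sort_getElem {α : Type*} [LinearOrder α] (s : Finset α) {k : ℕ}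
    (hk : k < s.sort.length) : #{x ∈ s | x < s.sort[k]} = k := by
  have hsorted := s.sortedLT_sort
  have hfilter : {x ∈ s | x < s.sort[k]} = (s.sort.take k).toFinset := by
    ext x
    simp only [mem_filter, List.mem_toFinset, List.mem_take_iff_getElem]
    constructor
    · rintro ⟨hx, hlt⟩
      obtain ⟨i, hi, rfl⟩ := List.getElem_of_mem ((mem_sort (· ≤ ·)).2 hx)
      have hik : i < k := (hsorted.strictMono_get.lt_iff_lt (a := ⟨i, hi⟩) (b := ⟨k, hk⟩)).1 hlt
      exact ⟨i, lt_min hik hi, rfl⟩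
    · rintro ⟨i, hi, rfl⟩
      exact ⟨(mem_sort (· ≤ ·)).1 (List.getElem_mem _),
        hsorted.getElem_lt_getElem_of_lt (lt_min_iff.1 hi).1⟩
  rw [hfilter, List.toFinset_card_of_nodup ((s.sort_nodup _).sublist (List.take_sublist _ _)),
    List.length_take]
  omega

theorem Finset.le_sort_getD_iff {α : Type*} [LinearOrder α] (s : Finset α) (k : ℕ) {v d : α}
    (hvd : v ≤ d) : v ≤ s.sort.getD k d ↔ #{x ∈ s | x < v} ≤ k := by
  rcases lt_or_ge k s.sort.length with hk | hk
  · rw [List.getD_eq_getElem _ _ hk]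
    have hcard := s.card_filter_lt_sort_getElem hk
    constructor
    · exact fun h => hcard ▸ card_le_card (monotone_filter_right s fun x _ hx => hx.trans_le h)
    · intro h
      by_contra! hlt
      refine (card_lt_card ?_).not_ge (hcard ▸ h)
      refine (ssubset_iff_of_subset (monotone_filter_right s fun x _ hx => hx.trans hlt)).2 ?_
      exact ⟨_, mem_filter.2 ⟨(mem_sort (· ≤ ·)).1 (List.getElem_mem _), hlt⟩, by simp⟩
  · rw [List.getD_eq_default _ _ hk]
    rw [length_sort] at hk
    exact iff_of_true hvd ((card_filter_le _ _).trans hk)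

theorem Finset.sort_getD_le {α : Type*} [LinearOrder α] {s : Finset α} {d : α}
    (h : ∀ x ∈ s, x ≤ d) (k : ℕ) : s.sort.getD k d ≤ d := by
  rcases lt_or_ge k s.sort.length with hk | hk
  · rw [List.getD_eq_getElem _ _ hk]
    exact h _ ((mem_sort (· ≤ ·)).1 (List.getElem_mem _))
  · rw [List.getD_eq_default _ _ hk]

theorem Nat.apply_eq_add_succ_of_lt_succ_of_bounds {f : ℕ → ℕ} {a m : ℕ}
    (hf : ∀ c, c + 1 < m → f c < f (c + 1)) (hlo : a < f 0) (hhi : f (m - 1) ≤ a + m)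
    {c : ℕ} (hc : c < m) : f c = a + c + 1 := by
  have hgrow : ∀ i j, i + j < m → f i + j ≤ f (i + j) := by
    intro i j
    induction j with
    | zero => simp
    | succ j ih =>
      intro hij
      have := hf (i + j) (by omega)
      have := ih (by omega)
      show f i + (j + 1) ≤ f (i + j + 1)
      omega
  have hleft := hgrow 0 c (by omega)
  have hright := hgrow c (m - 1 - c) (by omega)
  rw [zero_add] at hleft
  rw [show c + (m - 1 - c) = m - 1 by omega] at hright
  omega

section RowPartial

variable (μ : YoungDiagram)

@[simp]
lemma rowPartial_zero : rowPartial μ 0 = 0 := by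
  simp [rowPartial]

lemma rowPartial_succ (r : ℕ) : rowPartial μ (r + 1) = rowPartial μ r + μ.rowLen r := by
  rw [rowPartial, rowPartial, YoungDiagram.rowLen_eq_card, YoungDiagram.row,
    ← card_union_of_disjoint (disjoint_filter.2 fun c _ h => by omega), ← filter_or]
  congr 1
  exact filter_congr fun c _ => Nat.lt_succ_iff_lt_or_eq

lemma rowPartial_mono : Monotone (rowPartial μ) :=
  fun _ _ hab => card_le_card (monotone_filter_right _ fun _ _ h => h.trans_le hab)

lemma rowPartial_le_card (k : ℕ) : rowPartial μ k ≤ #μ.cells :=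
  card_filter_le _ _

end RowPartial

section AlphaPartial

variable {μ : YoungDiagram} {T : ℕ × ℕ → ℕ}

lemma alphaPartial_le_card (k : ℕ) : alphaPartial μ T k ≤ #μ.cells := by
  refine sort_getD_le (fun x hx => ?_) _
  rcases mem_insert.1 hx with rfl | hx
  · exact le_rfl
  · have := mem_Icc.1 (mem_filter.1 hx).1
    omega

lemma le_alphaPartial_iff {k v : ℕ} (hk : 1 ≤ k) (hv : v ≤ #μ.cells) :
    v ≤ alphaPartial μ T k ↔ #{x ∈ insert #μ.cells (DesY μ T) | x < v} < k := by
  rw [alphaPartial, le_sort_getD_iff _ _ hv]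
  omega

lemma exists_rowPartial_eq_of_mem_desY (hs : ∀ c ∈ μ.cells, T c = rowPartial μ c.1 + c.2 + 1)
    {d : ℕ} (hd : d ∈ DesY μ T) : ∃ j, rowPartial μ (j + 1) = d := by
  simp only [DesY, mem_filter] at hd
  obtain ⟨-, c₁, hc₁, c₂, hc₂, rfl, hnext, hrow⟩ := hd
  refine ⟨c₁.1, ?_⟩
  have hlen : c₁.2 < μ.rowLen c₁.1 := YoungDiagram.mem_iff_lt_rowLen.1 hc₁
  have := hs c₁ hc₁
  have := hs c₂ hc₂
  have := rowPartial_succ μ c₁.1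
  have := rowPartial_mono μ (show c₁.1 + 1 ≤ c₂.1 from hrow)
  omega

lemma rowPartial_le_alphaPartial_of_superstandard
    (hs : ∀ c ∈ μ.cells, T c = rowPartial μ c.1 + c.2 + 1) {k : ℕ} (hk : 1 ≤ k) :
    rowPartial μ k ≤ alphaPartial μ T k := by
  rw [le_alphaPartial_iff hk (rowPartial_le_card μ k)]
  have hsub : {x ∈ insert #μ.cells (DesY μ T) | x < rowPartial μ k} ⊆
      (range (k - 1)).image fun j => rowPartial μ (j + 1) := by
    intro x hx
    obtain ⟨hx, hlt⟩ := mem_filter.1 hx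
    rcases mem_insert.1 hx with rfl | hx
    · exact absurd (rowPartial_le_card μ k) hlt.not_ge
    · obtain ⟨j, rfl⟩ := exists_rowPartial_eq_of_mem_desY hs hx
      have := (rowPartial_mono μ).reflect_lt hlt
      exact mem_image.2 ⟨j, mem_range.2 (by omega), rfl⟩
  calc _ ≤ #(range (k - 1)) := (card_le_card hsub).trans card_image_le
    _ < k := by rw [card_range]; omega

end AlphaPartial

namespace IsStandardYT

variable {μ : YoungDiagram} {T : ℕ × ℕ → ℕ}

lemma entry_mem_Icc (hT : IsStandardYT μ T) {p : ℕ × ℕ} (hp : p ∈ μ.cells) :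
    T p ∈ Set.Icc 1 #μ.cells :=
  hT.1.mapsTo hp

lemma exists_entry_eq (hT : IsStandardYT μ T) {v : ℕ} (h₁ : 1 ≤ v) (hv : v ≤ #μ.cells) :
    ∃ p ∈ μ.cells, T p = v :=
  hT.1.surjOn ⟨h₁, hv⟩

lemma mem_desY (hT : IsStandardYT μ T) {p q : ℕ × ℕ} (hp : p ∈ μ.cells) (hq : q ∈ μ.cells)
    (hnext : T q = T p + 1) (hrow : p.1 < q.1) : T p ∈ DesY μ T := by
  have := (hT.entry_mem_Icc hp).1
  have := (hT.entry_mem_Icc hq).2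
  simp only [DesY, mem_filter, mem_Icc]
  exact ⟨⟨by omega, by omega⟩, p, hp, q, hq, rfl, hnext, hrow⟩

lemma exists_descent_between (hT : IsStandardYT μ T) {p q : ℕ × ℕ} (hp : p ∈ μ.cells)
    (hq : q ∈ μ.cells) (hrow : p.1 < q.1) (hlt : T p < T q) :
    ∃ d ∈ DesY μ T, T p ≤ d ∧ d < T q := by
  induction hgap : T q - T p generalizing p with
  | zero => omega
  | succ N ih =>
    by_cases hnext : T q = T p + 1
    · exact ⟨T p, hT.mem_desY hp hq hnext hrow, le_rfl, hlt⟩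
    obtain ⟨p', hp', hTp'⟩ := hT.exists_entry_eq (v := T p + 1) (by omega)
      (by have := (hT.entry_mem_Icc hq).2; omega)
    rcases lt_or_ge p.1 p'.1 with hrow' | hrow'
    · exact ⟨T p, hT.mem_desY hp hp' hTp' hrow', le_rfl, hlt⟩
    · obtain ⟨d, hd, hle, hlt'⟩ := ih hp' (hrow'.trans_lt hrow) (by omega) (by omega)
      exact ⟨d, hd, by omega, hlt'⟩

lemma row_le_card_descents (hT : IsStandardYT μ T) {p : ℕ × ℕ} (hp : p ∈ μ.cells) :
    p.1 ≤ #{d ∈ DesY μ T | d < T p} := by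
  obtain ⟨r, c⟩ := p
  induction r with
  | zero => exact Nat.zero_le _
  | succ r ih =>
    have hup : (r, c) ∈ μ.cells := μ.up_left_mem (Nat.le_succ r) le_rfl hp
    obtain ⟨d, hd, hle, hlt⟩ :=
      hT.exists_descent_between hup hp (Nat.lt_succ_self r) (hT.2.2.2 r c hup hp)
    have hnotMem : d ∉ {x ∈ DesY μ T | x < T (r, c)} := fun h => (mem_filter.1 h).2.not_ge hle
    calc r + 1 ≤ #{x ∈ DesY μ T | x < T (r, c)} + 1 := by have := ih hup; omega
      _ = #(insert d {x ∈ DesY μ T | x < T (r, c)}) := (card_insert_of_notMem hnotMem).symm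
      _ ≤ #{x ∈ DesY μ T | x < T (r + 1, c)} := card_le_card <| insert_subset
          (mem_filter.2 ⟨hd, hlt⟩) (monotone_filter_right _ fun _ _ h => h.trans (hle.trans_lt hlt))

lemma row_lt_of_le_alphaPartial (hT : IsStandardYT μ T) {k v : ℕ} (hk : 1 ≤ k)
    (hv : v ≤ alphaPartial μ T k) {p : ℕ × ℕ} (hp : p ∈ μ.cells) (hpv : T p ≤ v) : p.1 < k :=
  calc p.1 ≤ #{d ∈ DesY μ T | d < T p} := hT.row_le_card_descents hp
    _ ≤ #{x ∈ insert #μ.cells (DesY μ T) | x < v} := card_le_card fun _ hx =>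
        mem_filter.2 ⟨mem_insert_of_mem (mem_filter.1 hx).1, (mem_filter.1 hx).2.trans_le hpv⟩
    _ < k := (le_alphaPartial_iff hk (hv.trans (alphaPartial_le_card k))).1 hv

lemma Icc_subset_image_rowsBelow (hT : IsStandardYT μ T) {k v : ℕ} (hk : 1 ≤ k)
    (hv : v ≤ alphaPartial μ T k) : Icc 1 v ⊆ {c ∈ μ.cells | c.1 < k}.image T := by
  intro m hm
  rw [mem_Icc] at hm
  obtain ⟨p, hp, rfl⟩ :=
    hT.exists_entry_eq hm.1 (hm.2.trans (hv.trans (alphaPartial_le_card k)))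
  exact mem_image_of_mem T (mem_filter.2 ⟨hp, hT.row_lt_of_le_alphaPartial hk hv hp hm.2⟩)

lemma le_rowPartial_of_le_alphaPartial (hT : IsStandardYT μ T) {k v : ℕ} (hk : 1 ≤ k)
    (hv : v ≤ alphaPartial μ T k) : v ≤ rowPartial μ k :=
  calc v = #(Icc 1 v) := by simp
    _ ≤ #({c ∈ μ.cells | c.1 < k}.image T) := card_le_card (hT.Icc_subset_image_rowsBelow hk hv)
    _ ≤ rowPartial μ k := card_image_le

lemma entry_le_rowPartial (hT : IsStandardYT μ T) {k : ℕ} (hk : 1 ≤ k)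
    (hdom : rowPartial μ k ≤ alphaPartial μ T k) {p : ℕ × ℕ} (hp : p ∈ μ.cells) (hpk : p.1 < k) :
    T p ≤ rowPartial μ k := by
  have hsub := hT.Icc_subset_image_rowsBelow hk hdom
  have himage := eq_of_subset_of_card_le hsub (by rw [Nat.card_Icc, Nat.add_sub_cancel]; exact card_image_le)
  have hmem : T p ∈ Icc 1 (rowPartial μ k) := himage ▸ mem_image_of_mem T (mem_filter.2 ⟨hp, hpk⟩)
  exact (mem_Icc.1 hmem).2

lemma rowPartial_lt_entry (hT : IsStandardYT μ T)
    (hdom : ∀ k, 1 ≤ k → rowPartial μ k ≤ alphaPartial μ T k) {p : ℕ × ℕ} (hp : p ∈ μ.cells) :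
    rowPartial μ p.1 < T p := by
  rcases Nat.eq_zero_or_pos p.1 with h₀ | hpos
  · rw [h₀, rowPartial_zero]
    exact (hT.entry_mem_Icc hp).1
  · by_contra! hle
    exact lt_irrefl _ (hT.row_lt_of_le_alphaPartial hpos (hdom _ hpos) hp hle)

lemma eq_superstandard_of_rowPartial_le_alphaPartial (hT : IsStandardYT μ T)
    (hdom : ∀ k, 1 ≤ k → rowPartial μ k ≤ alphaPartial μ T k) :
    ∀ c ∈ μ.cells, T c = rowPartial μ c.1 + c.2 + 1 := by
  rintro ⟨r, x⟩ hc
  have hx : x < μ.rowLen r := YoungDiagram.mem_iff_lt_rowLen.1 hc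
  have hmem : ∀ y < μ.rowLen r, (r, y) ∈ μ.cells := fun y hy => YoungDiagram.mem_iff_lt_rowLen.2 hy
  refine Nat.apply_eq_add_succ_of_lt_succ_of_bounds (f := fun y => T (r, y))
    (fun y hy => hT.2.2.1 r y (hmem y (by omega)) (hmem _ hy))
    (hT.rowPartial_lt_entry hdom (hmem 0 (by omega))) ?_ hx
  calc T (r, μ.rowLen r - 1) ≤ rowPartial μ (r + 1) :=
        hT.entry_le_rowPartial (by omega) (hdom _ (by omega)) (hmem _ (by omega)) (by simp)
    _ = rowPartial μ r + μ.rowLen r := rowPartial_succ μ r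

end IsStandardYT

/-- every standard Young tableau `T` of shape `λ` satisfies
`α(T) ≤ λ` in dominance order (partial sums of the descent composition are at
most those of `λ`), with equality of compositions (all partial sums agree) if
and only if `T` is the superstandard tableau `T_λ`, whose entry in cell
`(r, c)` is the number of cells in earlier rows plus `c + 1`. -/
theorem descent_composition_dominated (μ : YoungDiagram) (T : ℕ × ℕ → ℕ)
    (hT : IsStandardYT μ T) :
    (∀ k : ℕ, 1 ≤ k → alphaPartial μ T k ≤ rowPartial μ k) ∧
    ((∀ k : ℕ, 1 ≤ k → alphaPartial μ T k = rowPartial μ k) ↔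
      ∀ c ∈ μ.cells, T c = rowPartial μ c.1 + c.2 + 1) := by
  have hdom : ∀ k, 1 ≤ k → alphaPartial μ T k ≤ rowPartial μ k :=
    fun k hk => hT.le_rowPartial_of_le_alphaPartial hk le_rfl
  refine ⟨hdom, fun heq => ?_, fun hs k hk => ?_⟩
  · exact hT.eq_superstandard_of_rowPartial_le_alphaPartial fun k hk => (heq k hk).ge
  · exact (hdom k hk).antisymm (rowPartial_le_alphaPartial_of_superstandard hs hk)
end

section
/- The standard dual equivalence graphs are rigid: if φ : SYT(λ) → SYT(μ) is a bijection between standard Young tableaux of partition shapes λ and μ (both of size n) that preserves descent sets and intertwines all elementary dual equivalence involutions (φ(d_i(T)) = d_i(φ(T)) for all 1 < i < n), then λ = μ and φ is the identity map. -/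
/-- The content of a cell. -/
def contentY (c : ℕ × ℕ) : ℤ := (c.2 : ℤ) - (c.1 : ℤ)

/-- The content reading order on cells: increasing content, and within a
diagonal, southwest to northeast (increasing column). -/
def rltY (x y : ℕ × ℕ) : Prop :=
  contentY x < contentY y ∨ (contentY x = contentY y ∧ x.2 < y.2)

instance (x y : ℕ × ℕ) : Decidable (rltY x y) :=
  inferInstanceAs (Decidable (_ ∨ _ ∧ _))

/-- The cell of a standard tableau containing the value `v` (via choice). -/
noncomputable def cellOfY (T : ℕ × ℕ → ℕ) (v : ℕ) : ℕ × ℕ :=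
  Classical.epsilon fun c => T c = v

/-- Haiman's elementary dual equivalence move `d_i` on standard Young tableaux,
acting through the content reading word: if `i` lies between `i-1` and `i+1`
in the reading word, do nothing; otherwise interchange `i` with whichever of
`i-1, i+1` lies further away in the reading word. -/
noncomputable def dY (T : ℕ × ℕ → ℕ) (i : ℕ) : ℕ × ℕ → ℕ :=
  let a := i - 1
  let b := i
  let c := i + 1
  let xa := cellOfY T a
  let xb := cellOfY T b
  let xc := cellOfY T c
  if (rltY xa xb ∧ rltY xb xc) ∨ (rltY xc xb ∧ rltY xb xa) then T
  else
    let p := if rltY xb xa ∧ rltY xb xc then (if rltY xa xc then c else a)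
             else (if rltY xa xc then a else c)
    fun x => if T x = b then p else if T x = p then b else T x

/-!
A standard tableau of shape `λ` whose descent set is that of the superstandard tableau `U(μ)`,
namely the partial sums of the row lengths of `μ`, has every entry of row `r` larger than the
first `r` row lengths of `μ` together: each step down a column passes a descent. Counting
entries row by row, `μ` is dominated by `λ`, and for `λ = μ` the tableau is `U(μ)` itself.
Applied to `φ⁻¹(U(μ))` and `φ(U(λ))` this gives `λ = μ` and `φ(U(λ)) = U(λ)`.

Since `φ` commutes with every `d_i`, it fixes every tableau joined to `U(λ)` by moves `d_i`,
and these are all of `SYT(λ)` (Haiman). For the connectivity, remove the cells holding `n`; when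
they differ, put `n - 2` in a corner that lies between them in the reading word, so that
`d_{n-1}` moves `n` from one of them to the other.
-/

open Finset Function

namespace IsStandardYT

variable {μ : YoungDiagram} {T : ℕ × ℕ → ℕ}

theorem eq_zero_of_notMem (hT : IsStandardYT μ T) {x : ℕ × ℕ} (hx : x ∉ μ.cells) : T x = 0 :=
  hT.2.1 x hx

theorem apply_mem_Icc (hT : IsStandardYT μ T) {x : ℕ × ℕ} (hx : x ∈ μ.cells) :
    T x ∈ Set.Icc 1 #μ.cells :=
  hT.1.mapsTo hx

theorem injOn (hT : IsStandardYT μ T) : Set.InjOn T μ.cells := hT.1.injOn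

theorem lt_right (hT : IsStandardYT μ T) {r c : ℕ} (h : (r, c + 1) ∈ μ.cells) :
    T (r, c) < T (r, c + 1) :=
  hT.2.2.1 r c (μ.up_left_mem le_rfl c.le_succ h) h

theorem lt_down (hT : IsStandardYT μ T) {r c : ℕ} (h : (r + 1, c) ∈ μ.cells) :
    T (r, c) < T (r + 1, c) :=
  hT.2.2.2 r c (μ.up_left_mem r.le_succ le_rfl h) h

theorem mem_of_pos (hT : IsStandardYT μ T) {x : ℕ × ℕ} (hx : 0 < T x) : x ∈ μ.cells := by
  by_contra h
  rw [hT.eq_zero_of_notMem h] at hx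
  exact hx.false

theorem exists_mem_eq (hT : IsStandardYT μ T) {v : ℕ} (h1 : 1 ≤ v) (h2 : v ≤ #μ.cells) :
    ∃ x ∈ μ.cells, T x = v :=
  hT.1.surjOn (Set.mem_Icc.mpr ⟨h1, h2⟩)

theorem apply_cellOfY (hT : IsStandardYT μ T) {v : ℕ} (h1 : 1 ≤ v) (h2 : v ≤ #μ.cells) :
    T (cellOfY T v) = v :=
  Classical.epsilon_spec (p := fun c => T c = v) <| by
    obtain ⟨x, -, hx⟩ := hT.exists_mem_eq h1 h2
    exact ⟨x, hx⟩

theorem cellOfY_mem (hT : IsStandardYT μ T) {v : ℕ} (h1 : 1 ≤ v) (h2 : v ≤ #μ.cells) :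
    cellOfY T v ∈ μ.cells :=
  hT.mem_of_pos (by rw [hT.apply_cellOfY h1 h2]; omega)

theorem cellOfY_apply (hT : IsStandardYT μ T) {x : ℕ × ℕ} (hx : x ∈ μ.cells) :
    cellOfY T (T x) = x :=
  have h := hT.apply_mem_Icc hx
  hT.injOn (hT.cellOfY_mem h.1 h.2) hx (hT.apply_cellOfY h.1 h.2)

/-- Surjectivity onto `{1, …, n}` is automatic by counting. -/
theorem of_injOn (hmaps : ∀ x ∈ μ.cells, 1 ≤ T x ∧ T x ≤ #μ.cells)
    (hinj : Set.InjOn T μ.cells) (hzero : ∀ x ∉ μ.cells, T x = 0)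
    (hright : ∀ r c, (r, c + 1) ∈ μ.cells → T (r, c) < T (r, c + 1))
    (hdown : ∀ r c, (r + 1, c) ∈ μ.cells → T (r, c) < T (r + 1, c)) :
    IsStandardYT μ T := by
  have hmaps' : Set.MapsTo T μ.cells (Icc 1 #μ.cells) := fun x hx => by
    simpa using hmaps x hx
  refine ⟨⟨fun x hx => Set.mem_Icc.mpr (hmaps x hx), hinj, ?_⟩, hzero,
    fun r c _ h => hright r c h, fun r c _ h => hdown r c h⟩
  simpa using surjOn_of_injOn_of_card_le T hmaps' hinj (by simp)

theorem sum_eq (hT : IsStandardYT μ T) : ∑ x ∈ μ.cells, T x = ∑ v ∈ Icc 1 #μ.cells, v :=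
  sum_nbij T (fun x hx => by simpa using hT.apply_mem_Icc hx) hT.injOn
    (by simpa using hT.1.surjOn) fun _ _ => rfl

end IsStandardYT

namespace YoungDiagram

variable {μ : YoungDiagram} {A B : ℕ × ℕ}

def IsCorner (μ : YoungDiagram) (A : ℕ × ℕ) : Prop :=
  A ∈ μ.cells ∧ (A.1 + 1, A.2) ∉ μ.cells ∧ (A.1, A.2 + 1) ∉ μ.cells

theorem IsCorner.not_le (hA : μ.IsCorner A) {x : ℕ × ℕ} (hx : x ∈ μ.cells) (hne : x ≠ A) :
    ¬ A ≤ x := by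
  rintro ⟨h1, h2⟩
  rcases h1.lt_or_eq with h1 | h1
  · exact hA.2.1 (μ.up_left_mem h1 h2 hx)
  rcases h2.lt_or_eq with h2 | h2
  · exact hA.2.2 (μ.up_left_mem h1.le h2 hx)
  · exact hne (Prod.ext h1.symm h2.symm)

theorem IsCorner.fst_ne (hA : μ.IsCorner A) (hB : μ.IsCorner B) (hne : A ≠ B) : A.1 ≠ B.1 := by
  intro h
  rcases le_total A.2 B.2 with h2 | h2
  · exact hA.not_le hB.1 hne.symm ⟨h.le, h2⟩
  · exact hB.not_le hA.1 hne ⟨h.ge, h2⟩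

theorem IsCorner.rowLen (hA : μ.IsCorner A) : μ.rowLen A.1 = A.2 + 1 := by
  have h1 := mem_iff_lt_rowLen.mp hA.1
  have h2 := mem_iff_lt_rowLen.not.mp hA.2.2
  omega

def eraseCorner (μ : YoungDiagram) (A : ℕ × ℕ) (hA : μ.IsCorner A) : YoungDiagram where
  cells := μ.cells.erase A
  isLowerSet x y hyx hx := by
    simp only [coe_erase, Set.mem_sdiff, Set.mem_singleton_iff, mem_coe] at hx ⊢
    exact ⟨μ.isLowerSet hyx hx.1, by rintro rfl; exact hA.not_le hx.1 hx.2 hyx⟩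

theorem mem_eraseCorner (hA : μ.IsCorner A) {x : ℕ × ℕ} :
    x ∈ (μ.eraseCorner A hA).cells ↔ x ≠ A ∧ x ∈ μ.cells := mem_erase

theorem card_eraseCorner (hA : μ.IsCorner A) :
    #(μ.eraseCorner A hA).cells = #μ.cells - 1 := card_erase_of_mem hA.1

theorem IsCorner.eraseCorner (hA : μ.IsCorner A) (hB : μ.IsCorner B) (hne : B ≠ A) :
    (μ.eraseCorner A hA).IsCorner B :=
  ⟨(mem_eraseCorner hA).mpr ⟨hne, hB.1⟩, fun h => hB.2.1 ((mem_eraseCorner hA).mp h).2,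
    fun h => hB.2.2 ((mem_eraseCorner hA).mp h).2⟩

theorem eraseCorner_comm (hA : μ.IsCorner A) (hB : μ.IsCorner B) (hne : B ≠ A) :
    (μ.eraseCorner A hA).eraseCorner B (hA.eraseCorner hB hne) =
      (μ.eraseCorner B hB).eraseCorner A (hB.eraseCorner hA hne.symm) :=
  YoungDiagram.ext (erase_right_comm ..)

end YoungDiagram

section Corner

open YoungDiagram

variable {μ : YoungDiagram} {T : ℕ × ℕ → ℕ} {A : ℕ × ℕ}

theorem IsStandardYT.update_of_eraseCorner (hA : μ.IsCorner A)
    (hT : IsStandardYT (μ.eraseCorner A hA) T) : IsStandardYT μ (update T A #μ.cells) := by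
  have hval : ∀ x ∈ μ.cells, x ≠ A → 1 ≤ T x ∧ T x < #μ.cells := fun x hx hne => by
    obtain ⟨h1, h2⟩ := hT.apply_mem_Icc ((mem_eraseCorner hA).mpr ⟨hne, hx⟩)
    rw [card_eraseCorner] at h2
    omega
  have hpos : 0 < #μ.cells := card_pos.mpr ⟨A, hA.1⟩
  refine .of_injOn (fun x hx => ?_) (fun x hx y hy hxy => ?_) (fun x hx => ?_)
    (fun r c h => ?_) (fun r c h => ?_)
  · by_cases hxA : x = A
    · rw [hxA, update_self]; exact ⟨hpos, le_rfl⟩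
    · rw [update_of_ne hxA]; exact (hval x hx hxA).imp_right le_of_lt
  · by_cases hxA : x = A <;> by_cases hyA : y = A
    · rw [hxA, hyA]
    · rw [hxA, update_self, update_of_ne hyA] at hxy
      exact absurd hxy.symm (hval y hy hyA).2.ne
    · rw [hyA, update_self, update_of_ne hxA] at hxy
      exact absurd hxy (hval x hx hxA).2.ne
    · rw [update_of_ne hxA, update_of_ne hyA] at hxy
      exact hT.injOn ((mem_eraseCorner hA).mpr ⟨hxA, hx⟩)
        ((mem_eraseCorner hA).mpr ⟨hyA, hy⟩) hxy
  · have hxA : x ≠ A := by rintro rfl; exact hx hA.1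
    rw [update_of_ne hxA]
    exact hT.eq_zero_of_notMem fun h => hx ((mem_eraseCorner hA).mp h).2
  · have hA' : (r, c) ≠ A := by rintro rfl; exact hA.2.2 h
    rcases eq_or_ne (r, c + 1) A with hA'' | hA''
    · simpa [hA'', update_of_ne hA'] using (hval _ (μ.up_left_mem le_rfl c.le_succ h) hA').2
    · simpa [update_of_ne hA', update_of_ne hA''] using
        hT.lt_right ((mem_eraseCorner hA).mpr ⟨hA'', h⟩)
  · have hA' : (r, c) ≠ A := by rintro rfl; exact hA.2.1 h
    rcases eq_or_ne (r + 1, c) A with hA'' | hA''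
    · simpa [hA'', update_of_ne hA'] using (hval _ (μ.up_left_mem r.le_succ le_rfl h) hA').2
    · simpa [update_of_ne hA', update_of_ne hA''] using
        hT.lt_down ((mem_eraseCorner hA).mpr ⟨hA'', h⟩)

theorem IsStandardYT.isCorner_of_eq_card (hT : IsStandardYT μ T) (hA : A ∈ μ.cells)
    (hTA : T A = #μ.cells) : μ.IsCorner A := by
  obtain ⟨r, c⟩ := A
  refine ⟨hA, fun h => ?_, fun h => ?_⟩ <;> dsimp only at h
  · have := hT.lt_down h; have := (hT.apply_mem_Icc h).2; omega
  · have := hT.lt_right h; have := (hT.apply_mem_Icc h).2; omega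

theorem IsStandardYT.eraseCorner_update_zero (hT : IsStandardYT μ T) (hA : μ.IsCorner A)
    (hTA : T A = #μ.cells) : IsStandardYT (μ.eraseCorner A hA) (update T A 0) := by
  have hmem {x} : x ∈ (μ.eraseCorner A hA).cells ↔ x ≠ A ∧ x ∈ μ.cells := mem_eraseCorner hA
  refine .of_injOn (fun x hx => ?_) (fun x hx y hy hxy => ?_) (fun x hx => ?_)
    (fun r c h => ?_) (fun r c h => ?_)
  · obtain ⟨hxA, hx⟩ := hmem.mp hx
    obtain ⟨h1, h2⟩ := hT.apply_mem_Icc hx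
    have : T x ≠ T A := fun h => hxA (hT.injOn hx hA.1 h)
    rw [update_of_ne hxA, card_eraseCorner]
    omega
  · obtain ⟨hxA, hx⟩ := hmem.mp hx
    obtain ⟨hyA, hy⟩ := hmem.mp hy
    rw [update_of_ne hxA, update_of_ne hyA] at hxy
    exact hT.injOn hx hy hxy
  · rcases eq_or_ne x A with rfl | hxA
    · exact update_self ..
    · rw [update_of_ne hxA]
      exact hT.eq_zero_of_notMem fun h => hx (hmem.mpr ⟨hxA, h⟩)
  · obtain ⟨hA'', h'⟩ := hmem.mp h
    have hA' : (r, c) ≠ A := fun he => hA.2.2 (he ▸ h')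
    simpa [update_of_ne hA', update_of_ne hA''] using hT.lt_right h'
  · obtain ⟨hA'', h'⟩ := hmem.mp h
    have hA' : (r, c) ≠ A := fun he => hA.2.1 (he ▸ h')
    simpa [update_of_ne hA', update_of_ne hA''] using hT.lt_down h'

end Corner

section Superstandard

variable {μ : YoungDiagram}

def rowLenSum (μ : YoungDiagram) (r : ℕ) : ℕ := ∑ j ∈ range r, μ.rowLen j

theorem rowLenSum_succ (μ : YoungDiagram) (r : ℕ) :
    rowLenSum μ (r + 1) = rowLenSum μ r + μ.rowLen r :=
  sum_range_succ ..

theorem rowLenSum_mono (μ : YoungDiagram) : Monotone (rowLenSum μ) := fun _ _ h =>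
  sum_le_sum_of_subset (range_subset_range.mpr h)

theorem card_filter_fst_lt (μ : YoungDiagram) (r : ℕ) :
    #{x ∈ μ.cells | x.1 < r} = rowLenSum μ r := by
  induction r with
  | zero => simp [rowLenSum]
  | succ r ih =>
    have hsplit : {x ∈ μ.cells | x.1 < r + 1} = {x ∈ μ.cells | x.1 < r} ∪ μ.row r := by
      ext x
      simp only [mem_filter, mem_union, YoungDiagram.mem_row_iff, YoungDiagram.mem_cells,
        Nat.lt_add_one_iff_lt_or_eq, and_or_left]
    have hdisj : Disjoint {x ∈ μ.cells | x.1 < r} (μ.row r) := disjoint_left.mpr fun x hx hx' => by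
      simp only [mem_filter, YoungDiagram.mem_row_iff] at hx hx'
      omega
    rw [hsplit, card_union_of_disjoint hdisj, ih, rowLenSum_succ, μ.rowLen_eq_card]

theorem rowLenSum_le_card (μ : YoungDiagram) (r : ℕ) : rowLenSum μ r ≤ #μ.cells :=
  card_filter_fst_lt μ r ▸ card_filter_le ..

theorem eq_of_rowLenSum_eq {lam mu : YoungDiagram} (h : rowLenSum lam = rowLenSum mu) :
    lam = mu := by
  have hrow (r : ℕ) : lam.rowLen r = mu.rowLen r := by
    have := congrFun h (r + 1)
    rw [rowLenSum_succ, rowLenSum_succ, congrFun h r] at this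
    omega
  ext ⟨r, c⟩
  simp only [YoungDiagram.mem_cells, YoungDiagram.mem_iff_lt_rowLen, hrow]

def superstd (μ : YoungDiagram) (x : ℕ × ℕ) : ℕ :=
  if x ∈ μ.cells then rowLenSum μ x.1 + x.2 + 1 else 0

theorem superstd_apply {x : ℕ × ℕ} (hx : x ∈ μ.cells) :
    superstd μ x = rowLenSum μ x.1 + x.2 + 1 := if_pos hx

theorem superstd_le {x : ℕ × ℕ} (hx : x ∈ μ.cells) : superstd μ x ≤ rowLenSum μ (x.1 + 1) := by
  have := YoungDiagram.mem_iff_lt_rowLen.mp hx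
  rw [superstd_apply hx, rowLenSum_succ]
  omega

theorem isStandardYT_superstd (μ : YoungDiagram) : IsStandardYT μ (superstd μ) := by
  refine .of_injOn (fun x hx => ?_) (fun x hx y hy hxy => ?_) (fun x hx => if_neg hx)
    (fun r c h => ?_) (fun r c h => ?_)
  · have := superstd_le hx
    have := rowLenSum_le_card μ (x.1 + 1)
    rw [superstd_apply hx] at *
    omega
  · have hmono {x y : ℕ × ℕ} (hx : x ∈ μ.cells) (h : x.1 < y.1) :
        rowLenSum μ x.1 + x.2 + 1 ≤ rowLenSum μ y.1 :=
      superstd_apply hx ▸ (superstd_le hx).trans (rowLenSum_mono μ h)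
    rw [superstd_apply hx, superstd_apply hy] at hxy
    rcases lt_trichotomy x.1 y.1 with h | h | h
    · have := hmono hx h; omega
    · exact Prod.ext h (by rw [h] at hxy; omega)
    · have := hmono hy h; omega
  · rw [superstd_apply h, superstd_apply (μ.up_left_mem le_rfl c.le_succ h)]
    dsimp only
    omega
  · have h' := μ.up_left_mem r.le_succ le_rfl h
    have := superstd_le h'
    rw [superstd_apply h, superstd_apply h'] at *
    dsimp only at *
    omega

theorem exists_rowLenSum_eq_of_mem_desY {i : ℕ} (hi : i ∈ DesY μ (superstd μ)) :
    ∃ s, 1 ≤ s ∧ rowLenSum μ s = i := by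
  simp only [DesY, mem_filter] at hi
  obtain ⟨-, x, hx, y, hy, rfl, hxy, hlt⟩ := hi
  have := superstd_le hx
  have := rowLenSum_mono μ (show x.1 + 1 ≤ y.1 from hlt)
  rw [superstd_apply hx] at *
  rw [superstd_apply hy] at hxy
  exact ⟨y.1, by omega, by omega⟩

end Superstandard

section Dominance

variable {lam mu : YoungDiagram} {T : ℕ × ℕ → ℕ}

theorem IsStandardYT.mem_desY_s9 (hT : IsStandardYT lam T) {w : ℕ} (h1 : 1 ≤ w)
    (h2 : w + 1 ≤ #lam.cells) (hlt : (cellOfY T w).1 < (cellOfY T (w + 1)).1) :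
    w ∈ DesY lam T :=
  mem_filter.mpr ⟨mem_Icc.mpr ⟨h1, by omega⟩, _, hT.cellOfY_mem h1 (by omega), _,
    hT.cellOfY_mem (by omega) h2, hT.apply_cellOfY h1 (by omega), hT.apply_cellOfY (by omega) h2,
    hlt⟩

theorem IsStandardYT.exists_mem_desY (hT : IsStandardYT lam T) {u v : ℕ} (hu : 1 ≤ u)
    (huv : u < v) (hv : v ≤ #lam.cells) (hlt : (cellOfY T u).1 < (cellOfY T v).1) :
    ∃ w ∈ DesY lam T, u ≤ w ∧ w < v := by
  induction v, huv using Nat.le_induction with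
  | base => exact ⟨u, hT.mem_desY_s9 hu hv hlt, le_rfl, u.lt_succ_self⟩
  | succ v huv ih =>
    by_cases hv' : (cellOfY T v).1 < (cellOfY T (v + 1)).1
    · exact ⟨v, hT.mem_desY_s9 (by omega) hv hv', by omega, v.lt_succ_self⟩
    · obtain ⟨w, hw, huw, hwv⟩ := ih (by omega) (by omega)
      exact ⟨w, hw, huw, by omega⟩

theorem IsStandardYT.fst_le_card_desY (hT : IsStandardYT lam T) {x : ℕ × ℕ}
    (hx : x ∈ lam.cells) : x.1 ≤ #{i ∈ DesY lam T | i < T x} := by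
  obtain ⟨r, c⟩ := x
  induction r with
  | zero => exact Nat.zero_le _
  | succ r ih =>
    have hy : (r, c) ∈ lam.cells := lam.up_left_mem r.le_succ le_rfl hx
    have hyx := hT.lt_down hx
    have hy1 := (hT.apply_mem_Icc hy).1
    obtain ⟨w, hw, hyw, hwx⟩ := hT.exists_mem_desY hy1 hyx (hT.apply_mem_Icc hx).2
      (by rw [hT.cellOfY_apply hy, hT.cellOfY_apply hx]; exact r.lt_succ_self)
    have hsub : {i ∈ DesY lam T | i < T (r, c)} ⊂ {i ∈ DesY lam T | i < T (r + 1, c)} :=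
      (ssubset_iff_of_subset fun i hi => mem_filter.mpr
        ⟨(mem_filter.mp hi).1, (mem_filter.mp hi).2.trans hyx⟩).mpr
        ⟨w, mem_filter.mpr ⟨hw, hwx⟩, fun h => (mem_filter.mp h).2.not_ge hyw⟩
    exact (Nat.succ_le_succ (ih hy)).trans (card_lt_card hsub)

theorem IsStandardYT.rowLenSum_lt_of_desY_eq (hT : IsStandardYT lam T)
    (hdes : DesY lam T = DesY mu (superstd mu)) {x : ℕ × ℕ} (hx : x ∈ lam.cells) :
    rowLenSum mu x.1 < T x := by
  by_contra! hle
  have hsub : {i ∈ DesY lam T | i < T x} ⊆ (Icc 1 (x.1 - 1)).image (rowLenSum mu) := by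
    intro i hi
    obtain ⟨hi, hix⟩ := mem_filter.mp hi
    obtain ⟨s, hs, rfl⟩ := exists_rowLenSum_eq_of_mem_desY (hdes ▸ hi)
    have := (rowLenSum_mono mu).reflect_lt (hix.trans_le hle)
    exact mem_image_of_mem _ (mem_Icc.mpr ⟨hs, by omega⟩)
  have hcard := (hT.fst_le_card_desY hx).trans ((card_le_card hsub).trans card_image_le)
  have hx0 : x.1 = 0 := by simp only [Nat.card_Icc] at hcard; omega
  have := (hT.apply_mem_Icc hx).1
  simp only [hx0, rowLenSum, range_zero, sum_empty] at hle
  omega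

theorem IsStandardYT.rowLenSum_le_of_desY_eq (hT : IsStandardYT lam T)
    (hdes : DesY lam T = DesY mu (superstd mu)) (hcard : #mu.cells ≤ #lam.cells) (j : ℕ) :
    rowLenSum mu j ≤ rowLenSum lam j := by
  have hsurj : Set.SurjOn T ({x ∈ lam.cells | x.1 < j} : Finset (ℕ × ℕ))
      (Icc 1 (rowLenSum mu j)) := by
    intro v hv
    obtain ⟨hv1, hv⟩ := mem_Icc.mp hv
    obtain ⟨x, hx, rfl⟩ := hT.exists_mem_eq hv1 (hv.trans ((rowLenSum_le_card mu j).trans hcard))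
    have hxj : x.1 < j := by
      by_contra! h
      have := hT.rowLenSum_lt_of_desY_eq hdes hx
      have := rowLenSum_mono mu h
      omega
    exact ⟨x, mem_filter.mpr ⟨hx, hxj⟩, rfl⟩
  simpa [card_filter_fst_lt] using card_le_card_of_surjOn T hsurj

/-- `T` dominates the superstandard tableau cellwise, and both have the same sum. -/
theorem IsStandardYT.eq_superstd_of_desY_eq (hT : IsStandardYT mu T)
    (hdes : DesY mu T = DesY mu (superstd mu)) : T = superstd mu := by
  have hge (c r : ℕ) (h : (r, c) ∈ mu.cells) : superstd mu (r, c) ≤ T (r, c) := by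
    rw [superstd_apply h]
    induction c with
    | zero => exact hT.rowLenSum_lt_of_desY_eq hdes h
    | succ c ih =>
      have := ih (mu.up_left_mem le_rfl c.le_succ h)
      have := hT.lt_right h
      dsimp only at *
      omega
  have heq := (sum_eq_sum_iff_of_le fun x hx => hge x.2 x.1 hx).mp
    ((isStandardYT_superstd mu).sum_eq.trans hT.sum_eq.symm)
  funext x
  by_cases hx : x ∈ mu.cells
  · exact (heq x hx).symm
  · rw [hT.eq_zero_of_notMem hx, (isStandardYT_superstd mu).eq_zero_of_notMem hx]

end Dominance

section ReadingOrder

theorem rltY_asymm {x y : ℕ × ℕ} (h : rltY x y) : ¬ rltY y x := by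
  unfold rltY at *
  omega

theorem rltY_trans {x y z : ℕ × ℕ} (hxy : rltY x y) (hyz : rltY y z) : rltY x z := by
  unfold rltY at *
  omega

theorem dY_eq_swap_of_between {T : ℕ × ℕ → ℕ} {i : ℕ} {a b c : ℕ × ℕ}
    (ha : cellOfY T (i - 1) = a) (hb : cellOfY T i = b) (hc : cellOfY T (i + 1) = c)
    (hbet : rltY b a ∧ rltY a c ∨ rltY c a ∧ rltY a b) :
    dY T i = fun x => Equiv.swap i (i + 1) (T x) := by
  simp only [dY, Equiv.swap_apply_def, ha, hb, hc]
  rcases hbet with ⟨hba, hac⟩ | ⟨hca, hab⟩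
  · simp [hac, hba, rltY_trans hba hac, rltY_asymm hba, rltY_asymm (rltY_trans hba hac)]
  · simp [hab, rltY_trans hca hab, rltY_asymm hca, rltY_asymm hab, rltY_asymm (rltY_trans hca hab)]

end ReadingOrder

section DualEquivalence

open YoungDiagram Relation

variable {μ : YoungDiagram} {T T' : ℕ × ℕ → ℕ} {A : ℕ × ℕ}

def DualEquivStep (μ : YoungDiagram) (T T' : ℕ × ℕ → ℕ) : Prop :=
  IsStandardYT μ T ∧ ∃ i, 1 < i ∧ i < #μ.cells ∧ T' = dY T i

theorem cellOfY_update (hA : μ.IsCorner A) (hT : IsStandardYT (μ.eraseCorner A hA) T) {v : ℕ}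
    (hv : 1 ≤ v) (hvn : v < #μ.cells) : cellOfY (update T A #μ.cells) v = cellOfY T v := by
  have hTA : T A = 0 := hT.eq_zero_of_notMem fun h => ((mem_eraseCorner hA).mp h).1 rfl
  unfold cellOfY
  congr 1
  funext x
  by_cases hx : x = A
  · subst hx
    simp only [update_self, hTA, eq_iff_iff]
    omega
  · rw [update_of_ne hx]

theorem dY_update (hA : μ.IsCorner A) (hT : IsStandardYT (μ.eraseCorner A hA) T) {i : ℕ}
    (hi : 1 < i) (hin : i + 1 < #μ.cells) :
    dY (update T A #μ.cells) i = update (dY T i) A #μ.cells := by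
  simp only [dY, cellOfY_update hA hT (v := i - 1) (by omega) (by omega),
    cellOfY_update hA hT (v := i) (by omega) (by omega),
    cellOfY_update hA hT (v := i + 1) (by omega) hin]
  have : #μ.cells ≠ i - 1 ∧ #μ.cells ≠ i ∧ #μ.cells ≠ i + 1 := by omega
  split_ifs <;> funext x <;> by_cases hx : x = A <;> simp [hx, this]

theorem DualEquivStep.update (hA : μ.IsCorner A) (h : DualEquivStep (μ.eraseCorner A hA) T T') :
    DualEquivStep μ (update T A #μ.cells) (update T' A #μ.cells) := by
  obtain ⟨hT, i, hi, hin, rfl⟩ := h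
  rw [card_eraseCorner] at hin
  exact ⟨hT.update_of_eraseCorner hA, i, hi, by omega, (dY_update hA hT hi (by omega)).symm⟩

theorem reflTransGen_update (hA : μ.IsCorner A)
    (h : ReflTransGen (DualEquivStep (μ.eraseCorner A hA)) T T') :
    ReflTransGen (DualEquivStep μ) (update T A #μ.cells) (update T' A #μ.cells) :=
  ReflTransGen.lift (update · A #μ.cells) (fun _ _ h => h.update hA) _ _ h

end DualEquivalence

section Connectivity

open YoungDiagram Relation

variable {μ : YoungDiagram} {T T' : ℕ × ℕ → ℕ} {A B P Q : ℕ × ℕ}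

/-- The end of the row just above `P`, once `P` and `Q` are removed. -/
theorem exists_isCorner_between (hP : μ.IsCorner P) (hQ : μ.IsCorner Q) (hne : Q ≠ P)
    (hQP : Q.1 < P.1) :
    ∃ C, ((μ.eraseCorner P hP).eraseCorner Q (hP.eraseCorner hQ hne)).IsCorner C ∧
      rltY P C ∧ rltY C Q := by
  set ν := (μ.eraseCorner P hP).eraseCorner Q (hP.eraseCorner hQ hne)
  have hmem {x : ℕ × ℕ} : x ∈ ν.cells ↔ x ≠ Q ∧ x ≠ P ∧ x ∈ μ.cells := by
    simp only [ν, mem_eraseCorner]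
  obtain ⟨p, c⟩ := P
  obtain ⟨q, d⟩ := Q
  obtain ⟨r, rfl⟩ : ∃ r, p = r + 1 := ⟨p - 1, by dsimp only at hQP; omega⟩
  have hμP := hP.rowLen
  have hμQ := hQ.rowLen
  dsimp only at hQP hμP hμQ
  have habove : (r, c) ∈ ν.cells := by
    refine hmem.mpr ⟨fun h => hQ.2.1 ?_, by simp, μ.up_left_mem r.le_succ le_rfl hP.1⟩
    simp only [Prod.mk.injEq] at h
    simpa [← h.1, ← h.2] using hP.1
  set L := ν.rowLen r
  have hcL : c < L := mem_iff_lt_rowLen.mp habove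
  have hC : (r, L - 1) ∈ ν.cells := mem_iff_lt_rowLen.mpr (by omega)
  obtain ⟨hCQ, -, hCμ⟩ := hmem.mp hC
  have hLμ : L - 1 < μ.rowLen r := mem_iff_lt_rowLen.mp hCμ
  have hμrQ := μ.rowLen_anti q r (by omega)
  refine ⟨(r, L - 1), ⟨hC, fun h => ?_, fun h => ?_⟩, ?_, ?_⟩
  · obtain ⟨-, hCP, h⟩ := hmem.mp h
    have := mem_iff_lt_rowLen.mp h
    exact hCP (Prod.ext rfl (by dsimp only at this ⊢; omega))
  · have := mem_iff_lt_rowLen.mp h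
    dsimp only at this
    omega
  · left
    simp only [contentY]
    omega
  · have : q = r → L - 1 ≠ d := fun h h' => hCQ (by rw [h, h'])
    left
    simp only [contentY]
    omega

theorem dualEquivStep_update_update (hA : μ.IsCorner A) (hB : μ.IsCorner B) (hne : B ≠ A)
    {S : ℕ × ℕ → ℕ}
    (hS : IsStandardYT ((μ.eraseCorner A hA).eraseCorner B (hA.eraseCorner hB hne)) S)
    {C : ℕ × ℕ} (hC : C ∈ ((μ.eraseCorner A hA).eraseCorner B (hA.eraseCorner hB hne)).cells)
    (hSC : S C = #μ.cells - 2) (hbet : rltY B C ∧ rltY C A ∨ rltY A C ∧ rltY C B) :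
    DualEquivStep μ (update (update S B (#μ.cells - 1)) A #μ.cells)
      (update (update S A (#μ.cells - 1)) B #μ.cells) := by
  set n := #μ.cells
  have hcard : #((μ.eraseCorner A hA).eraseCorner B (hA.eraseCorner hB hne)).cells = n - 2 := by
    rw [card_eraseCorner, card_eraseCorner]; omega
  have hn : 3 ≤ n := by have := (hS.apply_mem_Icc hC).1; omega
  obtain ⟨hCB, hCA, hCμ⟩ : C ≠ B ∧ C ≠ A ∧ C ∈ μ.cells := by
    simpa only [mem_eraseCorner] using hC
  have hSle (x : ℕ × ℕ) : S x ≤ n - 2 := by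
    by_cases hx : x ∈ ((μ.eraseCorner A hA).eraseCorner B (hA.eraseCorner hB hne)).cells
    · exact hcard ▸ (hS.apply_mem_Icc hx).2
    · rw [hS.eq_zero_of_notMem hx]; exact Nat.zero_le _
  set T := update (update S B (n - 1)) A n
  have hT : IsStandardYT μ T := by
    have := hS.update_of_eraseCorner (hA.eraseCorner hB hne)
    rw [card_eraseCorner] at this
    exact this.update_of_eraseCorner hA
  have hcell {x : ℕ × ℕ} (hx : x ∈ μ.cells) {v : ℕ} (hv : T x = v) : cellOfY T v = x :=
    hv ▸ hT.cellOfY_apply hx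
  have hdY : dY T (n - 1) = fun x => Equiv.swap (n - 1) (n - 1 + 1) (T x) :=
    dY_eq_swap_of_between (hcell hCμ (by simp [T, hCA, hCB, hSC]; omega))
      (hcell hB.1 (by simp [T, hne])) (hcell hA.1 (by simp [T]; omega)) hbet
  refine ⟨hT, n - 1, by omega, by omega, ?_⟩
  rw [hdY, show n - 1 + 1 = n by omega]
  funext x
  by_cases hxA : x = A
  · simp [T, hxA, hne.symm]
  by_cases hxB : x = B
  · simp [T, hxB, hne]
  have := hSle x
  rw [Equiv.swap_apply_of_ne_of_ne] <;> simp [T, hxA, hxB] <;> omega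

theorem exists_dualEquivStep_update (hA : μ.IsCorner A) (hB : μ.IsCorner B) (hne : B ≠ A) :
    ∃ S S', IsStandardYT (μ.eraseCorner A hA) S ∧ IsStandardYT (μ.eraseCorner B hB) S' ∧
      DualEquivStep μ (update S A #μ.cells) (update S' B #μ.cells) := by
  set ν := (μ.eraseCorner A hA).eraseCorner B (hA.eraseCorner hB hne)
  have hcomm : ν = (μ.eraseCorner B hB).eraseCorner A (hB.eraseCorner hA hne.symm) :=
    eraseCorner_comm hA hB hne
  obtain ⟨C, hC, hbet⟩ : ∃ C, ν.IsCorner C ∧ (rltY B C ∧ rltY C A ∨ rltY A C ∧ rltY C B) := by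
    rcases lt_or_gt_of_ne (hA.fst_ne hB hne.symm) with h | h
    · obtain ⟨C, hC, hBC, hCA⟩ := exists_isCorner_between hB hA hne.symm h
      exact ⟨C, hcomm ▸ hC, .inl ⟨hBC, hCA⟩⟩
    · obtain ⟨C, hC, hAC, hCB⟩ := exists_isCorner_between hA hB hne h
      exact ⟨C, hC, .inr ⟨hAC, hCB⟩⟩
  obtain ⟨S, hS, hSC⟩ : ∃ S, IsStandardYT ν S ∧ S C = #ν.cells :=
    ⟨_, (isStandardYT_superstd _).update_of_eraseCorner hC, update_self ..⟩
  have hνcard : #ν.cells = #μ.cells - 2 := by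
    rw [card_eraseCorner, card_eraseCorner]; omega
  have hS' : IsStandardYT ((μ.eraseCorner B hB).eraseCorner A (hB.eraseCorner hA hne.symm)) S :=
    hcomm ▸ hS
  refine ⟨_, _, ?_, ?_, dualEquivStep_update_update hA hB hne hS hC.1 ?_ hbet⟩
  · simpa [card_eraseCorner] using hS.update_of_eraseCorner (hA.eraseCorner hB hne)
  · simpa [card_eraseCorner] using hS'.update_of_eraseCorner (hB.eraseCorner hA hne.symm)
  · rw [hSC, hνcard]

theorem IsStandardYT.exists_eq_update (hT : IsStandardYT μ T) (hn : 0 < #μ.cells) :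
    ∃ A, ∃ hA : μ.IsCorner A, ∃ R, IsStandardYT (μ.eraseCorner A hA) R ∧
      T = update R A #μ.cells := by
  have hTA : T (cellOfY T #μ.cells) = #μ.cells := hT.apply_cellOfY hn le_rfl
  have hA := hT.isCorner_of_eq_card (hT.cellOfY_mem hn le_rfl) hTA
  refine ⟨_, hA, _, hT.eraseCorner_update_zero hA hTA, funext fun x => ?_⟩
  by_cases hx : x = cellOfY T #μ.cells
  · rw [hx, update_self, hTA]
  · rw [update_of_ne hx, update_of_ne hx]

theorem IsStandardYT.reflTransGen_dualEquivStep (hT : IsStandardYT μ T) (hT' : IsStandardYT μ T') :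
    ReflTransGen (DualEquivStep μ) T T' := by
  induction hn : #μ.cells generalizing μ T T' with
  | zero =>
    have hempty (x : ℕ × ℕ) : x ∉ μ.cells := by simp [card_eq_zero.mp hn]
    obtain rfl : T = T' := funext fun x => by
      rw [hT.eq_zero_of_notMem (hempty x), hT'.eq_zero_of_notMem (hempty x)]
    exact .refl
  | succ n ih =>
    have hlift {A : ℕ × ℕ} (hA : μ.IsCorner A) {S S' : ℕ × ℕ → ℕ}
        (hS : IsStandardYT (μ.eraseCorner A hA) S) (hS' : IsStandardYT (μ.eraseCorner A hA) S') :
        ReflTransGen (DualEquivStep μ) (update S A #μ.cells) (update S' A #μ.cells) :=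
      reflTransGen_update hA (ih hS hS' (by rw [card_eraseCorner, hn]; rfl))
    obtain ⟨A, hA, R, hR, rfl⟩ := hT.exists_eq_update (by omega)
    obtain ⟨B, hB, R', hR', rfl⟩ := hT'.exists_eq_update (by omega)
    by_cases hAB : B = A
    · subst hAB
      exact hlift hA hR hR'
    obtain ⟨S, S', hS, hS', hstep⟩ := exists_dualEquivStep_update hA hB hAB
    exact ((hlift hA hR hS).tail hstep).trans (hlift hB hS' hR')

end Connectivity

theorem Relation.ReflTransGen.apply_eq_of_dualEquivStep {μ : YoungDiagram}
    {φ : (ℕ × ℕ → ℕ) → (ℕ × ℕ → ℕ)}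
    (hφ : ∀ T, IsStandardYT μ T → ∀ i, 1 < i → i < #μ.cells → φ (dY T i) = dY (φ T) i)
    {T T' : ℕ × ℕ → ℕ} (h : Relation.ReflTransGen (DualEquivStep μ) T T') (hT : φ T = T) :
    φ T' = T' := by
  induction h with
  | refl => exact hT
  | tail _ hstep ih =>
    obtain ⟨hS, i, hi, hin, rfl⟩ := hstep
    rw [hφ _ hS i hi hin, ih]

/-- rigidity of standard dual equivalence graphs.  If a bijection
`φ` from `SYT(λ)` to `SYT(μ)` (λ, μ partitions of the same size `n`) preserves
descent sets and intertwines all elementary dual equivalence involutions `d_i`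
(`1 < i < n`), then `λ = μ` and `φ` is the identity. -/
theorem deg_rigidity (lam mu : YoungDiagram) (hn : lam.cells.card = mu.cells.card)
    (φ : (ℕ × ℕ → ℕ) → (ℕ × ℕ → ℕ))
    (hbij : Set.BijOn φ {T | IsStandardYT lam T} {T | IsStandardYT mu T})
    (hdes : ∀ T, IsStandardYT lam T → DesY mu (φ T) = DesY lam T)
    (hint : ∀ T, IsStandardYT lam T → ∀ i : ℕ, 1 < i → i < lam.cells.card →
      φ (dY T i) = dY (φ T) i) :
    lam = mu ∧ ∀ T, IsStandardYT lam T → φ T = T := by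
  have hU := isStandardYT_superstd lam
  obtain ⟨T₀, hT₀, hφT₀⟩ := hbij.surjOn (isStandardYT_superstd mu)
  have hle := IsStandardYT.rowLenSum_le_of_desY_eq hT₀ (by rw [← hdes T₀ hT₀, hφT₀]) hn.ge
  have hφU : IsStandardYT mu (φ (superstd lam)) := hbij.mapsTo hU
  have hge := hφU.rowLenSum_le_of_desY_eq (hdes _ hU) hn.le
  obtain rfl : lam = mu := eq_of_rowLenSum_eq (funext fun j => (hge j).antisymm (hle j))
  exact ⟨rfl, fun T hT => (hU.reflTransGen_dualEquivStep hT).apply_eq_of_dualEquivStep hint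
    (hφU.eq_superstd_of_desY_eq (hdes _ hU))⟩
end

section
/- The sum of fundamental quasisymmetric functions over standard Young tableaux of a fixed partition shape λ equals the Schur function: s_λ(x) = ∑_{T ∈ SYT(λ)} Q_{Des(T)}(x). -/
/-- `T` is a semistandard Young tableau of shape `μ` (entries ≥ 1 on cells,
zero outside, weakly increasing along rows, strictly increasing down
columns). -/
def IsSSYT (μ : YoungDiagram) (T : ℕ × ℕ → ℕ) : Prop :=
  (∀ c : ℕ × ℕ, c ∉ μ.cells → T c = 0) ∧
  (∀ c ∈ μ.cells, 1 ≤ T c) ∧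
  (∀ r c : ℕ, (r, c) ∈ μ.cells → (r, c + 1) ∈ μ.cells → T (r, c) ≤ T (r, c + 1)) ∧
  (∀ r c : ℕ, (r, c) ∈ μ.cells → (r + 1, c) ∈ μ.cells → T (r, c) < T (r + 1, c))

/-- The number of entries of `T` (on the cells of `μ`) equal to `v`; the
exponent of `x_v` in the monomial `x^T`. -/
def weightY (μ : YoungDiagram) (T : ℕ × ℕ → ℕ) (v : ℕ) : ℕ :=
  (μ.cells.filter fun c => T c = v).card

/-!
Standardization is a bijection between semistandard tableaux and pairs `(T, g)`. Order the cells
of a semistandard tableau `S` by entry and, among equal entries, from left to right; numbering the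
cells in this order gives a standard tableau `T`, and `g j` is the entry of `S` in the cell numbered
`j`, so that `S = g ∘ T`. Cells with equal entries form a horizontal strip read from left to right,
so they are numbered consecutively with rows weakly going up: `g` increases strictly at every
descent of `T`. Conversely, when `g` is strict at the descents of `T`, the cells of `T` on which
`g` is constant have weakly decreasing rows, so `g ∘ T` is column-strict and standardizes back
to `T`.
-/

open Finset

section Rank

variable {α β : Type*} [LinearOrder β] (s : Finset α) (k : α → β)

def rankBy (a : α) : ℕ := #{x ∈ s | k x < k a} + 1

variable {s k} {a b : α}

theorem rankBy_le_rankBy (h : k a ≤ k b) : rankBy s k a ≤ rankBy s k b := by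
  unfold rankBy
  gcongr

theorem rankBy_lt_rankBy (ha : a ∈ s) (h : k a < k b) : rankBy s k a < rankBy s k b := by
  unfold rankBy
  refine Nat.add_lt_add_right (card_lt_card ⟨?_, fun hsub => ?_⟩) 1
  · intro x hx
    simp only [mem_filter] at hx ⊢
    exact ⟨hx.1, hx.2.trans h⟩
  · exact lt_irrefl _ (mem_filter.1 (hsub (mem_filter.2 ⟨ha, h⟩))).2

theorem rankBy_lt_rankBy_iff (ha : a ∈ s) : rankBy s k a < rankBy s k b ↔ k a < k b :=
  ⟨fun h => lt_of_not_ge fun hba => (rankBy_le_rankBy hba).not_gt h, rankBy_lt_rankBy ha⟩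

theorem rankBy_mem_Icc (ha : a ∈ s) : rankBy s k a ∈ Set.Icc 1 #s :=
  ⟨Nat.le_add_left 1 _,
    card_lt_card ⟨filter_subset _ _, fun hsub => lt_irrefl _ (mem_filter.1 (hsub ha)).2⟩⟩

theorem rankBy_bijOn (hk : Set.InjOn k s) : Set.BijOn (rankBy s k) s (Set.Icc 1 #s) := by
  have hmaps : Set.MapsTo (rankBy s k) s (Set.Icc 1 #s) := fun a ha => rankBy_mem_Icc ha
  have hinj : Set.InjOn (rankBy s k) s := by
    intro a ha b hb hab
    rcases lt_trichotomy (k a) (k b) with h | h | h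
    · exact absurd hab (rankBy_lt_rankBy ha h).ne
    · exact hk ha hb h
    · exact absurd hab (rankBy_lt_rankBy hb h).ne'
  refine ⟨hmaps, hinj, ?_⟩
  have := surjOn_of_injOn_of_card_le (t := Icc 1 #s) _ (by simpa using hmaps) hinj (by simp)
  simpa using this

theorem card_filter_lt_of_bijOn {T : α → ℕ} (hT : Set.BijOn T s (Set.Icc 1 #s)) (ha : a ∈ s) :
    #{x ∈ s | T x < T a} = T a - 1 := by
  have hTa := hT.mapsTo ha
  rw [← Nat.card_Ico 1 (T a)]
  refine card_nbij T (fun x hx => ?_) (hT.injOn.mono (coe_subset.2 (filter_subset _ _)))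
    (fun j hj => ?_)
  · simp only [coe_filter, coe_Ico, Set.mem_Ico] at hx ⊢
    exact ⟨(hT.mapsTo hx.1).1, hx.2⟩
  · simp only [coe_Ico, Set.mem_Ico] at hj
    obtain ⟨x, hx, rfl⟩ := hT.surjOn ⟨hj.1, hj.2.le.trans hTa.2⟩
    exact ⟨x, by simpa using ⟨hx, hj.2⟩, rfl⟩

theorem rankBy_eq_of_bijOn {T : α → ℕ} (hT : Set.BijOn T s (Set.Icc 1 #s))
    (hk : ∀ x ∈ s, ∀ y ∈ s, T x < T y → k x < k y) (ha : a ∈ s) : rankBy s k a = T a := by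
  have hfilter : {x ∈ s | k x < k a} = {x ∈ s | T x < T a} := by
    refine filter_congr fun x hx => ⟨fun hxa => ?_, hk x hx a ha⟩
    rcases lt_trichotomy (T x) (T a) with h | h | h
    · exact h
    · exact absurd (hT.injOn hx ha h ▸ hxa) (lt_irrefl _)
    · exact absurd (hk a ha x hx h) (lt_asymm hxa)
  rw [rankBy, hfilter, card_filter_lt_of_bijOn hT ha]
  have := (hT.mapsTo ha).1
  omega

end Rank

section Tableaux

variable {μ : YoungDiagram} {S T : ℕ × ℕ → ℕ} {c₁ c₂ : ℕ × ℕ}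

theorem IsSSYT.row_le (hS : IsSSYT μ S) {r a₁ a₂ : ℕ} (h₂ : (r, a₂) ∈ μ.cells) (h : a₁ ≤ a₂) :
    S (r, a₁) ≤ S (r, a₂) := by
  induction a₂, h using Nat.le_induction with
  | base => exact le_rfl
  | succ a _ ih =>
    have ha : (r, a) ∈ μ.cells := μ.up_left_mem le_rfl a.le_succ h₂
    exact (ih ha).trans (hS.2.2.1 r a ha h₂)

theorem IsSSYT.col_lt (hS : IsSSYT μ S) {r₁ r₂ a : ℕ} (h₂ : (r₂, a) ∈ μ.cells) (h : r₁ < r₂) :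
    S (r₁, a) < S (r₂, a) := by
  induction r₂, h using Nat.le_induction with
  | base => exact hS.2.2.2 r₁ a (μ.up_left_mem r₁.le_succ le_rfl h₂) h₂
  | succ r _ ih =>
    have hr : (r, a) ∈ μ.cells := μ.up_left_mem r.le_succ le_rfl h₂
    exact (ih hr).trans (hS.2.2.2 r a hr h₂)

theorem IsSSYT.le_of_le (hS : IsSSYT μ S) (h₂ : c₂ ∈ μ.cells) (h : c₁ ≤ c₂) : S c₁ ≤ S c₂ := by
  obtain ⟨r₁, a₁⟩ := c₁
  obtain ⟨r₂, a₂⟩ := c₂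
  obtain ⟨hr, ha⟩ := Prod.mk_le_mk.1 h
  refine (hS.row_le (μ.up_left_mem hr le_rfl h₂) ha).trans ?_
  rcases hr.eq_or_lt with rfl | hr
  · exact le_rfl
  · exact (hS.col_lt h₂ hr).le

theorem IsSSYT.lt_of_snd_le_of_fst_lt (hS : IsSSYT μ S) (h₂ : c₂ ∈ μ.cells) (ha : c₁.2 ≤ c₂.2)
    (hr : c₁.1 < c₂.1) : S c₁ < S c₂ :=
  (hS.row_le (μ.up_left_mem hr.le le_rfl h₂) ha).trans_lt (hS.col_lt h₂ hr)

theorem IsStandardYT.isSSYT (hT : IsStandardYT μ T) : IsSSYT μ T :=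
  ⟨hT.2.1, fun _ hc => (hT.1.mapsTo hc).1, fun r a h₁ h₂ => (hT.2.2.1 r a h₁ h₂).le, hT.2.2.2⟩

theorem IsStandardYT.lt_of_le_of_ne (hT : IsStandardYT μ T) (h₂ : c₂ ∈ μ.cells) (h : c₁ ≤ c₂)
    (hne : c₁ ≠ c₂) : T c₁ < T c₂ :=
  (hT.isSSYT.le_of_le h₂ h).lt_of_ne fun heq => hne (hT.1.injOn (μ.isLowerSet h h₂) h₂ heq)

theorem IsStandardYT.mem_desY_s11 (hT : IsStandardYT μ T) (h₁ : c₁ ∈ μ.cells) (h₂ : c₂ ∈ μ.cells)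
    (hsucc : T c₂ = T c₁ + 1) (hr : c₁.1 < c₂.1) : T c₁ ∈ DesY μ T := by
  have h₁I := hT.1.mapsTo h₁
  have h₂I := hT.1.mapsTo h₂
  refine mem_filter.2 ⟨mem_Icc.2 ⟨h₁I.1, ?_⟩, c₁, h₁, c₂, h₂, rfl, hsucc, hr⟩
  simp only [Set.mem_Icc] at h₂I
  omega

theorem IsStandardYT.fst_le_of_forall_not_mem_desY (hT : IsStandardYT μ T) (h₁ : c₁ ∈ μ.cells)
    (h₂ : c₂ ∈ μ.cells) (hle : T c₁ ≤ T c₂) (hdes : ∀ j, T c₁ ≤ j → j < T c₂ → j ∉ DesY μ T) :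
    c₂.1 ≤ c₁.1 := by
  obtain ⟨m, hm⟩ := Nat.exists_eq_add_of_le hle
  induction m generalizing c₂ with
  | zero => rw [hT.1.injOn h₂ h₁ hm]
  | succ m ih =>
    have h₂I := hT.1.mapsTo h₂
    obtain ⟨d, hd, hdm⟩ := hT.1.surjOn (⟨(hT.1.mapsTo h₁).1.trans (Nat.le_add_right _ m),
      by simp only [Set.mem_Icc] at h₂I; omega⟩ : T c₁ + m ∈ Set.Icc 1 #μ.cells)
    have hdr : d.1 ≤ c₁.1 := ih hd (by omega) (fun j hj hj' => hdes j hj (by omega)) hdm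
    have hnot : ¬d.1 < c₂.1 := fun hr =>
      hdes (T d) (by omega) (by omega) (hT.mem_desY_s11 hd h₂ (by omega) hr)
    omega

theorem weightY_comp_of_bijOn (hT : Set.BijOn T μ.cells (Set.Icc 1 #μ.cells)) (g : ℕ → ℕ)
    (v : ℕ) : weightY μ (g ∘ T) v = #{j ∈ Icc 1 #μ.cells | g j = v} := by
  refine card_nbij T (fun c hc => ?_) (hT.injOn.mono (coe_subset.2 (filter_subset _ _)))
    (fun j hj => ?_)
  · simp only [coe_filter, Function.comp_apply] at hc ⊢
    exact ⟨mem_Icc.2 (hT.mapsTo hc.1), hc.2⟩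
  · simp only [coe_filter, mem_Icc] at hj
    obtain ⟨c, hc, rfl⟩ := hT.surjOn hj.1
    exact ⟨c, by simpa using ⟨hc, hj.2⟩, rfl⟩

end Tableaux

/-- `g` records a monomial `x_{g 1} ⋯ x_{g n}` of the fundamental quasisymmetric function
`Q_{Des T}`. -/
structure IsDescentCompatible (μ : YoungDiagram) (T : ℕ × ℕ → ℕ) (g : ℕ → ℕ) : Prop where
  eq_zero : ∀ j : ℕ, ¬(1 ≤ j ∧ j ≤ μ.cells.card) → g j = 0
  one_le : ∀ j : ℕ, 1 ≤ j → j ≤ μ.cells.card → 1 ≤ g j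
  le_succ : ∀ j : ℕ, 1 ≤ j → j + 1 ≤ μ.cells.card → g j ≤ g (j + 1)
  lt_succ_of_mem_desY : ∀ j ∈ DesY μ T, g j < g (j + 1)

namespace IsDescentCompatible

variable {μ : YoungDiagram} {T : ℕ × ℕ → ℕ} {g : ℕ → ℕ} {c₁ c₂ : ℕ × ℕ}

theorem le_of_le (hg : IsDescentCompatible μ T g) {i j : ℕ} (hi : 1 ≤ i) (hij : i ≤ j)
    (hj : j ≤ #μ.cells) : g i ≤ g j := by
  induction j, hij using Nat.le_induction with
  | base => exact le_rfl
  | succ j hij ih => exact (ih (by omega)).trans (hg.le_succ j (hi.trans hij) hj)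

theorem fst_le_of_eq (hg : IsDescentCompatible μ T g) (hT : IsStandardYT μ T)
    (h₁ : c₁ ∈ μ.cells) (h₂ : c₂ ∈ μ.cells) (hle : T c₁ ≤ T c₂) (heq : g (T c₁) = g (T c₂)) :
    c₂.1 ≤ c₁.1 := by
  refine hT.fst_le_of_forall_not_mem_desY h₁ h₂ hle fun j hj₁ hj₂ hdes => ?_
  have h₁I := hT.1.mapsTo h₁
  have h₂I := hT.1.mapsTo h₂
  simp only [Set.mem_Icc] at h₁I h₂I
  have := hg.le_of_le h₁I.1 hj₁ (by omega)
  have := hg.lt_succ_of_mem_desY j hdes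
  have : g (j + 1) ≤ g (T c₂) := hg.le_of_le (by omega) hj₂ h₂I.2
  omega

theorem lex_lt_of_lt (hg : IsDescentCompatible μ T g) (hT : IsStandardYT μ T)
    (h₁ : c₁ ∈ μ.cells) (h₂ : c₂ ∈ μ.cells) (hlt : T c₁ < T c₂) :
    toLex (g (T c₁), c₁.2) < toLex (g (T c₂), c₂.2) := by
  have h₂I := hT.1.mapsTo h₂
  rcases (hg.le_of_le (hT.1.mapsTo h₁).1 hlt.le h₂I.2).eq_or_lt with heq | hlt'
  · refine Prod.Lex.toLex_lt_toLex.2 (Or.inr ⟨heq, lt_of_not_ge fun ha => ?_⟩)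
    have hr := hg.fst_le_of_eq hT h₁ h₂ hlt.le heq
    exact (hT.lt_of_le_of_ne h₁ (Prod.mk_le_mk.2 ⟨hr, ha⟩) fun h => hlt.ne' (h ▸ rfl)).not_gt hlt
  · exact Prod.Lex.toLex_lt_toLex.2 (Or.inl hlt')

theorem isSSYT_comp (hg : IsDescentCompatible μ T g) (hT : IsStandardYT μ T) :
    IsSSYT μ (g ∘ T) := by
  refine ⟨fun c hc => ?_, fun c hc => ?_, fun r a h₁ h₂ => ?_, fun r a h₁ h₂ => ?_⟩
  · simp only [Function.comp_apply, hT.2.1 c hc]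
    exact hg.eq_zero 0 (by omega)
  · exact hg.one_le _ (hT.1.mapsTo hc).1 (hT.1.mapsTo hc).2
  · exact hg.le_of_le (hT.1.mapsTo h₁).1 (hT.2.2.1 r a h₁ h₂).le (hT.1.mapsTo h₂).2
  · have hlt := hT.2.2.2 r a h₁ h₂
    refine (hg.le_of_le (hT.1.mapsTo h₁).1 hlt.le (hT.1.mapsTo h₂).2).lt_of_ne fun heq => ?_
    have := hg.fst_le_of_eq hT h₁ h₂ hlt.le heq
    simp at this

end IsDescentCompatible

section Standardize

variable (μ : YoungDiagram) (S : ℕ × ℕ → ℕ)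

def standardize (c : ℕ × ℕ) : ℕ :=
  if c ∈ μ.cells then rankBy μ.cells (fun d => toLex (S d, d.2)) c else 0

/-- The entries of `S` in weakly increasing order, indexed by `1, …, n`. -/
noncomputable def sortedEntries (j : ℕ) : ℕ :=
  if 1 ≤ j ∧ j ≤ #μ.cells then S (Function.invFunOn (standardize μ S) μ.cells j) else 0

variable {μ S} {T : ℕ × ℕ → ℕ} {g : ℕ → ℕ} {c₁ c₂ : ℕ × ℕ}

theorem standardize_of_mem {c : ℕ × ℕ} (hc : c ∈ μ.cells) :
    standardize μ S c = rankBy μ.cells (fun d => toLex (S d, d.2)) c :=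
  if_pos hc

theorem standardize_lt_standardize_iff (h₁ : c₁ ∈ μ.cells) (h₂ : c₂ ∈ μ.cells) :
    standardize μ S c₁ < standardize μ S c₂ ↔ toLex (S c₁, c₁.2) < toLex (S c₂, c₂.2) := by
  rw [standardize_of_mem h₁, standardize_of_mem h₂, rankBy_lt_rankBy_iff h₁]

theorem IsSSYT.injOn_lex (hS : IsSSYT μ S) : Set.InjOn (fun d => toLex (S d, d.2)) μ.cells := by
  intro c₁ h₁ c₂ h₂ heq
  obtain ⟨hv, ha⟩ := Prod.ext_iff.1 (toLex.injective heq)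
  obtain ⟨r₁, a₁⟩ := c₁
  obtain ⟨r₂, a₂⟩ := c₂
  obtain rfl : a₁ = a₂ := ha
  rcases lt_trichotomy r₁ r₂ with hr | rfl | hr
  · exact absurd hv (hS.col_lt h₂ hr).ne
  · rfl
  · exact absurd hv (hS.col_lt h₁ hr).ne'

theorem IsSSYT.standardize_bijOn (hS : IsSSYT μ S) :
    Set.BijOn (standardize μ S) μ.cells (Set.Icc 1 #μ.cells) :=
  (rankBy_bijOn hS.injOn_lex).congr fun _ hc => (standardize_of_mem hc).symm

theorem IsSSYT.isStandardYT_standardize (hS : IsSSYT μ S) : IsStandardYT μ (standardize μ S) := by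
  refine ⟨hS.standardize_bijOn, fun c hc => if_neg hc, fun r a h₁ h₂ => ?_, fun r a h₁ h₂ => ?_⟩
  · rw [standardize_lt_standardize_iff h₁ h₂, Prod.Lex.toLex_lt_toLex]
    rcases (hS.2.2.1 r a h₁ h₂).eq_or_lt with heq | hlt
    · exact Or.inr ⟨heq, a.lt_succ_self⟩
    · exact Or.inl hlt
  · rw [standardize_lt_standardize_iff h₁ h₂, Prod.Lex.toLex_lt_toLex]
    exact Or.inl (hS.2.2.2 r a h₁ h₂)

theorem IsSSYT.sortedEntries_comp_standardize (hS : IsSSYT μ S) :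
    sortedEntries μ S ∘ standardize μ S = S := by
  funext c
  by_cases hc : c ∈ μ.cells
  · have hI : 1 ≤ _ ∧ _ ≤ _ := hS.standardize_bijOn.mapsTo hc
    rw [Function.comp_apply, sortedEntries, if_pos hI, hS.standardize_bijOn.invOn_invFunOn.1 hc]
  · simp [sortedEntries, standardize, hc, hS.1 c hc]

theorem IsSSYT.sortedEntries_standardize (hS : IsSSYT μ S) (c : ℕ × ℕ) :
    sortedEntries μ S (standardize μ S c) = S c :=
  congrFun hS.sortedEntries_comp_standardize c

theorem IsSSYT.isDescentCompatible_sortedEntries (hS : IsSSYT μ S) :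
    IsDescentCompatible μ (standardize μ S) (sortedEntries μ S) := by
  have hbij := hS.standardize_bijOn
  refine ⟨fun j hj => if_neg hj, fun j hj₁ hj₂ => ?_, fun j hj₁ hj₂ => ?_, fun j hj => ?_⟩
  · obtain ⟨c, hc, rfl⟩ := hbij.surjOn ⟨hj₁, hj₂⟩
    rw [hS.sortedEntries_standardize]
    exact hS.2.1 c hc
  · obtain ⟨c₁, h₁, hc₁⟩ := hbij.surjOn (⟨hj₁, by omega⟩ : j ∈ Set.Icc 1 #μ.cells)
    obtain ⟨c₂, h₂, hc₂⟩ := hbij.surjOn (⟨by omega, hj₂⟩ : j + 1 ∈ Set.Icc 1 #μ.cells)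
    have hlex := (standardize_lt_standardize_iff (S := S) h₁ h₂).1 (by omega)
    rw [← hc₂, ← hc₁, hS.sortedEntries_standardize, hS.sortedEntries_standardize]
    rcases Prod.Lex.toLex_lt_toLex.1 hlex with hlt | ⟨heq, -⟩
    · exact hlt.le
    · exact heq.le
  · obtain ⟨c₁, h₁, c₂, h₂, rfl, hc₂, hr⟩ := (mem_filter.1 hj).2
    have hlex := (standardize_lt_standardize_iff (S := S) h₁ h₂).1 (by omega)
    rw [← hc₂, hS.sortedEntries_standardize, hS.sortedEntries_standardize]
    rcases Prod.Lex.toLex_lt_toLex.1 hlex with hlt | ⟨heq, ha⟩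
    · exact hlt
    · exact absurd heq (hS.lt_of_snd_le_of_fst_lt h₂ (c₁ := c₁) ha.le hr).ne

theorem IsDescentCompatible.standardize_comp (hg : IsDescentCompatible μ T g)
    (hT : IsStandardYT μ T) : standardize μ (g ∘ T) = T := by
  funext c
  by_cases hc : c ∈ μ.cells
  · exact (standardize_of_mem hc).trans
      (rankBy_eq_of_bijOn hT.1 (fun _ h₁ _ h₂ => hg.lex_lt_of_lt hT h₁ h₂) hc)
  · rw [standardize, if_neg hc, hT.2.1 c hc]

theorem IsDescentCompatible.sortedEntries_comp (hg : IsDescentCompatible μ T g)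
    (hT : IsStandardYT μ T) : sortedEntries μ (g ∘ T) = g := by
  funext j
  by_cases hj : 1 ≤ j ∧ j ≤ #μ.cells
  · obtain ⟨c, -, rfl⟩ := hT.1.surjOn hj
    have := (hg.isSSYT_comp hT).sortedEntries_standardize c
    rwa [hg.standardize_comp hT] at this
  · rw [sortedEntries, if_neg hj, hg.eq_zero j hj]

end Standardize

/-- `s_λ = ∑_{T ∈ SYT(λ)} Q_{Des(T)}`, stated coefficientwise:
for every monomial weight `f`, the number of semistandard tableaux of shape `λ`
with weight `f` equals the number of pairs `(T, g)` of a standard tableau `T`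
of shape `λ` and a weakly increasing sequence `g : [n] → {1,2,…}` that is
strict at each descent of `T` and has content `f`. -/
theorem schur_eq_sum_quasisym (μ : YoungDiagram) (f : ℕ → ℕ) :
    Set.ncard {T : ℕ × ℕ → ℕ | IsSSYT μ T ∧ ∀ v : ℕ, 1 ≤ v → weightY μ T v = f v} =
    Set.ncard {p : (ℕ × ℕ → ℕ) × (ℕ → ℕ) |
      IsStandardYT μ p.1 ∧
      (∀ j : ℕ, ¬(1 ≤ j ∧ j ≤ μ.cells.card) → p.2 j = 0) ∧
      (∀ j : ℕ, 1 ≤ j → j ≤ μ.cells.card → 1 ≤ p.2 j) ∧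
      (∀ j : ℕ, 1 ≤ j → j + 1 ≤ μ.cells.card → p.2 j ≤ p.2 (j + 1)) ∧
      (∀ j ∈ DesY μ p.1, p.2 j < p.2 (j + 1)) ∧
      (∀ v : ℕ, 1 ≤ v →
        ((Finset.Icc 1 μ.cells.card).filter fun j => p.2 j = v).card = f v)} := by
  refine (Set.BijOn.ncard_eq (f := fun p : (ℕ × ℕ → ℕ) × (ℕ → ℕ) => p.2 ∘ p.1) ?_).symm
  refine Set.InvOn.bijOn (f' := fun S => (standardize μ S, sortedEntries μ S)) ⟨?_, ?_⟩ ?_ ?_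
  · rintro ⟨T, g⟩ ⟨hT, h₀, h₁, hle, hdes, -⟩
    have hg : IsDescentCompatible μ T g := ⟨h₀, h₁, hle, hdes⟩
    exact Prod.ext (hg.standardize_comp hT) (hg.sortedEntries_comp hT)
  · rintro S ⟨hS, -⟩
    exact hS.sortedEntries_comp_standardize
  · rintro ⟨T, g⟩ ⟨hT, h₀, h₁, hle, hdes, hw⟩
    exact ⟨IsDescentCompatible.isSSYT_comp ⟨h₀, h₁, hle, hdes⟩ hT,
      fun v hv => (weightY_comp_of_bijOn hT.1 g v).trans (hw v hv)⟩
  · rintro S ⟨hS, hw⟩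
    obtain ⟨h₀, h₁, hle, hdes⟩ := hS.isDescentCompatible_sortedEntries
    refine ⟨hS.isStandardYT_standardize, h₀, h₁, hle, hdes, fun v hv => ?_⟩
    rw [← weightY_comp_of_bijOn hS.standardize_bijOn, hS.sortedEntries_comp_standardize]
    exact hw v hv
end

section
/- For a k-tuple of skew shapes μ and a standard filling T of μ, the combined involution D_i (acting by d_i when the three values i-1, i, i+1 are pairwise at shifted-content distance more than k, and by the twisted move d̃_i when their maximal pairwise shifted-content distance is at most k) preserves the diagonal descent set: dDes(D_i(T)) = dDes(T). -/
/-!  A `k`-tuple of skew shapes is modelled as `S : Fin k → Finset (ℕ × ℕ)`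
with each `S j` the cell set of a skew diagram `λ/μ`; a cell of the tuple is
an element of `Fin k × ℕ × ℕ`, written `(j, r, c)` for row `r`, column `c` of
the `j`-th component.  A standard filling assigns `1,…,N` bijectively to the
cells, increasing along rows and columns of each component. -/

/-- All cells of the tuple of shapes. -/
def tupleCells (k : ℕ) (S : Fin k → Finset (ℕ × ℕ)) : Finset (Fin k × ℕ × ℕ) :=
  Finset.univ.biUnion fun j => (S j).image fun c => (j, c)

/-- The shifted content `c̃(x) = k·c(x) + j` of a cell `x = (j, r, c)`, where
`c(x) = c - r` is the usual content. -/
def shiftedContent (k : ℕ) (x : Fin k × ℕ × ℕ) : ℤ :=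
  (k : ℤ) * ((x.2.2 : ℤ) - (x.2.1 : ℤ)) + (x.1 : ℤ)

/-- The content reading order: increasing shifted content, and southwest to
northeast (increasing column) along each diagonal. -/
def tupleRlt (k : ℕ) (x y : Fin k × ℕ × ℕ) : Prop :=
  shiftedContent k x < shiftedContent k y ∨
    (shiftedContent k x = shiftedContent k y ∧ x.2.2 < y.2.2)

instance (k : ℕ) (x y : Fin k × ℕ × ℕ) : Decidable (tupleRlt k x y) :=
  inferInstanceAs (Decidable (_ ∨ _ ∧ _))

/-- `S j` is a skew diagram (a set-difference of Young diagrams). -/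
def IsSkewShape (s : Finset (ℕ × ℕ)) : Prop :=
  ∃ lam mu : YoungDiagram, mu ≤ lam ∧ s = lam.cells \ mu.cells

/-- `T` is a standard filling of the tuple of shapes `S`. -/
def IsStandardTuple (k : ℕ) (S : Fin k → Finset (ℕ × ℕ))
    (T : Fin k × ℕ × ℕ → ℕ) : Prop :=
  Set.BijOn T ↑(tupleCells k S) (Set.Icc 1 (tupleCells k S).card) ∧
  (∀ x, x ∉ tupleCells k S → T x = 0) ∧
  (∀ (j : Fin k) (r c : ℕ), (r, c) ∈ S j → (r, c + 1) ∈ S j →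
    T (j, r, c) < T (j, r, c + 1)) ∧
  (∀ (j : Fin k) (r c : ℕ), (r, c) ∈ S j → (r + 1, c) ∈ S j →
    T (j, r, c) < T (j, r + 1, c))

/-- The cell of `T` containing the value `v` (via choice). -/
noncomputable def tupleCellOf (k : ℕ) [NeZero k] (T : Fin k × ℕ × ℕ → ℕ)
    (v : ℕ) : Fin k × ℕ × ℕ :=
  haveI : Nonempty (Fin k × ℕ × ℕ) :=
    ⟨(⟨0, Nat.pos_of_ne_zero (NeZero.ne k)⟩, 0, 0)⟩
  Classical.epsilon fun x => T x = v

/-- The combined involution `D_i` on standard fillings of a `k`-tuple of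
shapes: it acts by the elementary dual equivalence move `d_i` when the maximal
pairwise shifted-content distance of the cells of `i-1, i, i+1` exceeds `k`,
and by the twisted move `d̃_i` when that distance is at most `k`; both act on
the content reading word. -/
noncomputable def Dmove (k : ℕ) [NeZero k] (i : ℕ)
    (T : Fin k × ℕ × ℕ → ℕ) : Fin k × ℕ × ℕ → ℕ :=
  let a := i - 1
  let b := i
  let c := i + 1
  let xa := tupleCellOf k T a
  let xb := tupleCellOf k T b
  let xc := tupleCellOf k T c
  if (tupleRlt k xa xb ∧ tupleRlt k xb xc) ∨
      (tupleRlt k xc xb ∧ tupleRlt k xb xa) then T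
  else if (k : ℤ) <
      max (max |shiftedContent k xa - shiftedContent k xb|
               |shiftedContent k xc - shiftedContent k xb|)
          |shiftedContent k xa - shiftedContent k xc| then
    -- untwisted move: interchange `b` with the further of `a, c`
    let p := if tupleRlt k xb xa ∧ tupleRlt k xb xc then
               (if tupleRlt k xa xc then c else a)
             else (if tupleRlt k xa xc then a else c)
    fun x => if T x = b then p else if T x = p then b else T x
  else
    -- twisted move: cyclically rotate `a, b, c` so `b` crosses over
    let u := if tupleRlt k xa xc then a else c  -- outer value occurring first
    let v := if tupleRlt k xa xc then c else a  -- outer value occurring last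
    if tupleRlt k xb xa ∧ tupleRlt k xb xc then
      fun x => if T x = b then u else if T x = u then v
               else if T x = v then b else T x
    else
      fun x => if T x = u then b else if T x = v then u
               else if T x = b then v else T x

/-- The set of diagonal descents of `T`. -/
def dDesSet (k : ℕ) (S : Fin k → Finset (ℕ × ℕ)) (T : Fin k × ℕ × ℕ → ℕ) :
    Set ((Fin k × ℕ × ℕ) × (Fin k × ℕ × ℕ)) :=
  {p | p.1 ∈ tupleCells k S ∧ p.2 ∈ tupleCells k S ∧
    shiftedContent k p.2 - shiftedContent k p.1 = (k : ℤ) ∧ T p.2 < T p.1}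

/-- The set of diagonal inversions of `T`. -/
def dInvSet (k : ℕ) (S : Fin k → Finset (ℕ × ℕ)) (T : Fin k × ℕ × ℕ → ℕ) :
    Set ((Fin k × ℕ × ℕ) × (Fin k × ℕ × ℕ)) :=
  {p | p.1 ∈ tupleCells k S ∧ p.2 ∈ tupleCells k S ∧
    0 < shiftedContent k p.2 - shiftedContent k p.1 ∧
    shiftedContent k p.2 - shiftedContent k p.1 < (k : ℤ) ∧ T p.2 < T p.1}


/-!
Both moves only permute the entries `i - 1, i, i + 1`. A relabelling of the entries of a
standard filling `T` yields a standard filling with the same diagonal descents as soon as it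
keeps the relative order of any two cells at shifted-content distance exactly `k`: horizontal
and vertical neighbours are such pairs, and so are the pairs that make up `dDes`.

Cells with equal shifted content lie on one diagonal of one skew component, and the square
they span forces their entries to differ by at least `3`; so the cells of `i - 1, i, i + 1`
have distinct shifted contents. Unless `D_i` is the identity, the cell of `i` is extreme among
them in content order. Then `d_i` exchanges `i` with the neighbouring value in the other
extreme cell, more than `k` away, and `d̃_i` rotates the three entries, reversing exactly the
pairs that contain the middle cell, which is less than `k` away from both others.
-/

section

variable {k : ℕ} {S : Fin k → Finset (ℕ × ℕ)} {T T' : Fin k × ℕ × ℕ → ℕ}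

theorem mem_tupleCells {j : Fin k} {r c : ℕ} :
    (j, r, c) ∈ tupleCells k S ↔ (r, c) ∈ S j := by
  simp [tupleCells]

theorem IsSkewShape.mem_of_le {s : Finset (ℕ × ℕ)} (hs : IsSkewShape s)
    {r c r' c' a b : ℕ} (h : (r, c) ∈ s) (h' : (r', c') ∈ s)
    (hra : r ≤ a) (har : a ≤ r') (hcb : c ≤ b) (hbc : b ≤ c') : (a, b) ∈ s := by
  obtain ⟨lam, mu, -, rfl⟩ := hs
  simp only [Finset.mem_sdiff, YoungDiagram.mem_cells] at h h' ⊢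
  exact ⟨lam.up_left_mem har hbc h'.1, fun hm => h.2 (mu.up_left_mem hra hcb hm)⟩

theorem shiftedContent_eq_iff [NeZero k] {x y : Fin k × ℕ × ℕ} :
    shiftedContent k x = shiftedContent k y ↔ x.1 = y.1 ∧ x.2.2 + y.2.1 = y.2.2 + x.2.1 := by
  obtain ⟨j, r, c⟩ := x
  obtain ⟨j', r', c'⟩ := y
  have hk : (0 : ℤ) < k := by exact_mod_cast Nat.pos_of_ne_zero (NeZero.ne k)
  simp only [shiftedContent, Fin.ext_iff]
  constructor
  · intro h
    have hj : (j : ℤ) - j' = 0 := by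
      refine Int.eq_zero_of_abs_lt_dvd (m := k) ⟨(c' - r') - (c - r), by linarith⟩ ?_
      rw [abs_sub_lt_iff]; omega
    have hcont : (k : ℤ) * ((c : ℤ) - r) = k * ((c' : ℤ) - r') := by linarith
    have := mul_left_cancel₀ hk.ne' hcont
    omega
  · rintro ⟨hj, hc⟩
    rw [hj, show (c : ℤ) - r = c' - r' by omega]

theorem tupleRlt_iff_of_ne {x y : Fin k × ℕ × ℕ}
    (h : shiftedContent k x ≠ shiftedContent k y) :
    tupleRlt k x y ↔ shiftedContent k x < shiftedContent k y :=
  or_iff_left fun h' => h h'.1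

namespace IsStandardTuple

theorem injOn (hT : IsStandardTuple k S T) : Set.InjOn T (tupleCells k S) :=
  hT.1.injOn

theorem tupleCellOf_apply [NeZero k] (hT : IsStandardTuple k S T) {x : Fin k × ℕ × ℕ}
    (hx : x ∈ tupleCells k S) : tupleCellOf k T (T x) = x := by
  have hT' : T (tupleCellOf k T (T x)) = T x := Classical.epsilon_spec (p := (T · = T x)) ⟨x, rfl⟩
  refine hT.injOn ?_ hx hT'
  by_contra hout
  have := hT.1.mapsTo hx
  rw [hT.2.1 _ hout] at hT'
  simp only [Set.mem_Icc] at this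
  omega

theorem tupleCellOf_spec [NeZero k] (hT : IsStandardTuple k S T) {v : ℕ}
    (hv : v ∈ Set.Icc 1 (tupleCells k S).card) :
    tupleCellOf k T v ∈ tupleCells k S ∧ T (tupleCellOf k T v) = v := by
  obtain ⟨x, hx, rfl⟩ := hT.1.surjOn hv
  rw [hT.tupleCellOf_apply hx]
  exact ⟨hx, rfl⟩

theorem add_three_le_of_square (hT : IsStandardTuple k S T) {j : Fin k}
    (hS : IsSkewShape (S j)) {r c : ℕ} (h : (r, c) ∈ S j) (h' : (r + 1, c + 1) ∈ S j) :
    T (j, r, c) + 3 ≤ T (j, r + 1, c + 1) := by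
  have hright : (r, c + 1) ∈ S j := hS.mem_of_le h h' le_rfl (by omega) (by omega) le_rfl
  have hdown : (r + 1, c) ∈ S j := hS.mem_of_le h h' (by omega) le_rfl le_rfl (by omega)
  have := hT.2.2.1 j r c h hright
  have := hT.2.2.2 j r (c + 1) hright h'
  have := hT.2.2.2 j r c h hdown
  have := hT.2.2.1 j (r + 1) c hdown h'
  have hne : T (j, r, c + 1) ≠ T (j, r + 1, c) := fun he => by
    simpa using hT.injOn (mem_tupleCells.2 hright) (mem_tupleCells.2 hdown) he
  omega

theorem add_three_le_of_diag (hT : IsStandardTuple k S T) {j : Fin k}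
    (hS : IsSkewShape (S j)) {r c t : ℕ} (h : (r, c) ∈ S j)
    (h' : (r + t + 1, c + t + 1) ∈ S j) :
    T (j, r, c) + 3 ≤ T (j, r + t + 1, c + t + 1) := by
  induction t with
  | zero => exact hT.add_three_le_of_square hS h h'
  | succ t ih =>
    have hmid : (r + t + 1, c + t + 1) ∈ S j :=
      hS.mem_of_le h h' (by omega) (by omega) (by omega) (by omega)
    have := hT.add_three_le_of_square hS hmid h'
    have := ih hmid
    show T (j, r, c) + 3 ≤ T (j, r + t + 1 + 1, c + t + 1 + 1)
    omega

theorem add_three_le_of_shiftedContent_eq [NeZero k] (hT : IsStandardTuple k S T)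
    (hS : ∀ j, IsSkewShape (S j)) {x y : Fin k × ℕ × ℕ} (hx : x ∈ tupleCells k S)
    (hy : y ∈ tupleCells k S) (hlt : T x < T y)
    (hc : shiftedContent k x = shiftedContent k y) : T x + 3 ≤ T y := by
  obtain ⟨j, r, c⟩ := x
  obtain ⟨j', r', c'⟩ := y
  obtain ⟨rfl, hdiag : c + r' = c' + r⟩ := shiftedContent_eq_iff.1 hc
  dsimp only at hlt ⊢
  rw [mem_tupleCells] at hx hy
  rcases lt_trichotomy r r' with hr | rfl | hr
  · obtain ⟨t, rfl⟩ : ∃ t, r' = r + t + 1 := ⟨r' - r - 1, by omega⟩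
    obtain rfl : c' = c + t + 1 := by omega
    exact hT.add_three_le_of_diag (hS j) hx hy
  · obtain rfl : c = c' := by omega
    exact absurd hlt (lt_irrefl _)
  · obtain ⟨t, rfl⟩ : ∃ t, r = r' + t + 1 := ⟨r - r' - 1, by omega⟩
    obtain rfl : c = c' + t + 1 := by omega
    have := hT.add_three_le_of_diag (hS j) hy hx
    omega

theorem shiftedContent_ne_of_le_add_two [NeZero k] (hT : IsStandardTuple k S T)
    (hS : ∀ j, IsSkewShape (S j)) {x y : Fin k × ℕ × ℕ} (hx : x ∈ tupleCells k S)
    (hy : y ∈ tupleCells k S) (hlt : T x < T y) (hle : T y ≤ T x + 2) :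
    shiftedContent k x ≠ shiftedContent k y := fun h => by
  have := hT.add_three_le_of_shiftedContent_eq hS hx hy hlt h
  omega

theorem relabel (hT : IsStandardTuple k S T) (hzero : ∀ x ∉ tupleCells k S, T' x = 0)
    (hmaps : Set.MapsTo T' (tupleCells k S) (Set.Icc 1 (tupleCells k S).card))
    (hinj : Set.InjOn T' (tupleCells k S))
    (hord : ∀ x ∈ tupleCells k S, ∀ y ∈ tupleCells k S,
      |shiftedContent k x - shiftedContent k y| = k → T x < T y → T' x < T' y) :
    IsStandardTuple k S T' ∧ dDesSet k S T' = dDesSet k S T := by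
  have hsurj : Set.SurjOn T' (tupleCells k S) (Set.Icc 1 (tupleCells k S).card) := by
    simpa using Finset.surjOn_of_injOn_of_card_le T' (t := Finset.Icc 1 (tupleCells k S).card)
      (by simpa using hmaps) hinj (by simp)
  have hiff {x y} (hx : x ∈ tupleCells k S) (hy : y ∈ tupleCells k S)
      (hd : |shiftedContent k x - shiftedContent k y| = k) : T x < T y ↔ T' x < T' y := by
    refine ⟨hord x hx y hy hd, fun h => ?_⟩
    rcases lt_trichotomy (T x) (T y) with hlt | heq | hgt
    · exact hlt
    · rw [hT.injOn hx hy heq] at h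
      exact absurd h (lt_irrefl _)
    · exact absurd (hord y hy x hx (by rwa [abs_sub_comm]) hgt) h.not_gt
  have hrow (j : Fin k) (r c : ℕ) :
      |shiftedContent k (j, r, c) - shiftedContent k (j, r, c + 1)| = k := by
    simp only [shiftedContent]
    push_cast
    rw [show (k : ℤ) * (c - r) + j - (k * (c + 1 - r) + j) = -k by ring, abs_neg, Nat.abs_cast]
  have hcol (j : Fin k) (r c : ℕ) :
      |shiftedContent k (j, r, c) - shiftedContent k (j, r + 1, c)| = k := by
    simp only [shiftedContent]
    push_cast
    rw [show (k : ℤ) * (c - r) + j - (k * (c - (r + 1)) + j) = k by ring, Nat.abs_cast]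
  refine ⟨⟨⟨hmaps, hinj, hsurj⟩, hzero, fun j r c h h' => ?_, fun j r c h h' => ?_⟩, ?_⟩
  · exact hord _ (mem_tupleCells.2 h) _ (mem_tupleCells.2 h') (hrow j r c) (hT.2.2.1 j r c h h')
  · exact hord _ (mem_tupleCells.2 h) _ (mem_tupleCells.2 h') (hcol j r c) (hT.2.2.2 j r c h h')
  · ext ⟨x, y⟩
    simp only [dDesSet, Set.mem_ofPred_eq]
    refine and_congr_right fun hx => and_congr_right fun hy => and_congr_right fun h => ?_
    exact (hiff hy hx (by rw [h, Nat.abs_cast])).symm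

theorem relabel_window (hT : IsStandardTuple k S T) {a b : ℕ} (ha : 1 ≤ a)
    (hb : b ≤ (tupleCells k S).card) (σ : ℕ → ℕ) (hfix : ∀ t, t < a ∨ b < t → σ t = t)
    (hmaps : ∀ t, a ≤ t → t ≤ b → a ≤ σ t ∧ σ t ≤ b)
    (hinj : ∀ u v, a ≤ u → u ≤ b → a ≤ v → v ≤ b → σ u = σ v → u = v)
    (hord : ∀ x ∈ tupleCells k S, ∀ y ∈ tupleCells k S, a ≤ T x → T y ≤ b → T x < T y →
      |shiftedContent k x - shiftedContent k y| = k → σ (T x) < σ (T y)) :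
    IsStandardTuple k S (fun x => σ (T x)) ∧
      dDesSet k S (fun x => σ (T x)) = dDesSet k S T := by
  refine hT.relabel (fun x hx => ?_) (fun x hx => ?_) (fun x hx y hy h => hT.injOn hx hy ?_)
    (fun x hx y hy hd hlt => ?_)
  · rw [hT.2.1 x hx]
    exact hfix 0 (by omega)
  · have := hT.1.mapsTo hx
    simp only [Set.mem_Icc] at this ⊢
    have := hfix (T x)
    have := hmaps (T x)
    omega
  · have := hfix (T x)
    have := hmaps (T x)
    have := hfix (T y)
    have := hmaps (T y)
    have := hinj (T x) (T y)
    omega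
  · by_cases hw : a ≤ T x ∧ T y ≤ b
    · exact hord x hx y hy hw.1 hw.2 hlt hd
    · have := hfix (T x)
      have := hmaps (T x)
      have := hfix (T y)
      have := hmaps (T y)
      omega

theorem relabel_three (hT : IsStandardTuple k S T) {a : ℕ} (ha : 1 ≤ a)
    (hin : a + 2 ≤ (tupleCells k S).card) {xa xb xc : Fin k × ℕ × ℕ}
    (hxa : xa ∈ tupleCells k S) (hxb : xb ∈ tupleCells k S) (hxc : xc ∈ tupleCells k S)
    (hTa : T xa = a) (hTb : T xb = a + 1) (hTc : T xc = a + 2) (σ : ℕ → ℕ)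
    (hfix : ∀ t, t < a ∨ a + 2 < t → σ t = t)
    (hmaps : ∀ t, a ≤ t → t ≤ a + 2 → a ≤ σ t ∧ σ t ≤ a + 2)
    (hinj : σ a ≠ σ (a + 1) ∧ σ (a + 1) ≠ σ (a + 2) ∧ σ a ≠ σ (a + 2))
    (hab : |shiftedContent k xa - shiftedContent k xb| = k → σ a < σ (a + 1))
    (hbc : |shiftedContent k xb - shiftedContent k xc| = k → σ (a + 1) < σ (a + 2))
    (hac : |shiftedContent k xa - shiftedContent k xc| = k → σ a < σ (a + 2)) :
    IsStandardTuple k S (fun x => σ (T x)) ∧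
      dDesSet k S (fun x => σ (T x)) = dDesSet k S T := by
  refine hT.relabel_window (a := a) (b := a + 2) ha hin σ hfix hmaps
    (fun u v hu hu' hv hv' h => ?_) (fun x hx y hy hlo hhi hlt hd => ?_)
  · rcases (by omega : u = a ∨ u = a + 1 ∨ u = a + 2) with hu | hu | hu <;>
    rcases (by omega : v = a ∨ v = a + 1 ∨ v = a + 2) with hv | hv | hv <;>
    subst u v <;> omega
  · have hcell : ∀ z ∈ tupleCells k S, a ≤ T z → T z ≤ a + 2 → z = xa ∨ z = xb ∨ z = xc := by
      intro z hz hlo hhi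
      rcases (by omega : T z = a ∨ T z = a + 1 ∨ T z = a + 2) with h | h | h
      · exact Or.inl (hT.injOn hz hxa (h.trans hTa.symm))
      · exact Or.inr (Or.inl (hT.injOn hz hxb (h.trans hTb.symm)))
      · exact Or.inr (Or.inr (hT.injOn hz hxc (h.trans hTc.symm)))
    rcases hcell x hx hlo (by omega) with rfl | rfl | rfl <;>
    rcases hcell y hy (by omega) hhi with rfl | rfl | rfl <;>
    simp only [hTa, hTb, hTc] at hlt ⊢ <;> omega

theorem relabel_swap (hT : IsStandardTuple k S T) {a : ℕ} (ha : 1 ≤ a)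
    (hin : a + 2 ≤ (tupleCells k S).card) {xa xb xc : Fin k × ℕ × ℕ}
    (hxa : xa ∈ tupleCells k S) (hxb : xb ∈ tupleCells k S) (hxc : xc ∈ tupleCells k S)
    (hTa : T xa = a) (hTb : T xb = a + 1) (hTc : T xc = a + 2) {p : ℕ}
    (hp : p = a ∧ |shiftedContent k xa - shiftedContent k xb| ≠ k ∨
      p = a + 2 ∧ |shiftedContent k xb - shiftedContent k xc| ≠ k) :
    IsStandardTuple k S (fun x => if T x = a + 1 then p else if T x = p then a + 1 else T x) ∧
      dDesSet k S (fun x => if T x = a + 1 then p else if T x = p then a + 1 else T x) =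
        dDesSet k S T := by
  rcases hp with ⟨hp, hd⟩ | ⟨hp, hd⟩ <;> subst p <;>
  refine hT.relabel_three ha hin hxa hxb hxc hTa hTb hTc
    (fun t => if t = a + 1 then _ else if t = _ then a + 1 else t)
    (fun t ht => ?_) (fun t h h' => ?_) ?_ (fun h => ?_) (fun h => ?_) (fun h => ?_) <;>
  split_ifs <;> omega

theorem relabel_cycle_of_min (hT : IsStandardTuple k S T) {a : ℕ} (ha : 1 ≤ a)
    (hin : a + 2 ≤ (tupleCells k S).card) {xa xb xc : Fin k × ℕ × ℕ}
    (hxa : xa ∈ tupleCells k S) (hxb : xb ∈ tupleCells k S) (hxc : xc ∈ tupleCells k S)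
    (hTa : T xa = a) (hTb : T xb = a + 1) (hTc : T xc = a + 2) {u v : ℕ}
    (huv : u = a ∧ v = a + 2 ∧ shiftedContent k xa < shiftedContent k xc ∨
      u = a + 2 ∧ v = a ∧ shiftedContent k xc < shiftedContent k xa)
    (hmin : shiftedContent k xb < shiftedContent k xa ∧
      shiftedContent k xb < shiftedContent k xc)
    (hclose : shiftedContent k xa - shiftedContent k xb ≤ k ∧
      shiftedContent k xc - shiftedContent k xb ≤ k) :
    IsStandardTuple k S (fun x => if T x = a + 1 then u else if T x = u then v
        else if T x = v then a + 1 else T x) ∧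
      dDesSet k S (fun x => if T x = a + 1 then u else if T x = u then v
        else if T x = v then a + 1 else T x) = dDesSet k S T := by
  rcases huv with ⟨hu, hv, hac⟩ | ⟨hu, hv, hac⟩ <;> subst u v <;>
  refine hT.relabel_three ha hin hxa hxb hxc hTa hTb hTc
    (fun t => if t = a + 1 then _ else if t = _ then _ else if t = _ then a + 1 else t)
    (fun t ht => ?_) (fun t h h' => ?_) ?_ (fun h => ?_) (fun h => ?_) (fun h => ?_) <;>
  (try rw [abs_eq (by positivity)] at h) <;>
  split_ifs <;> omega

theorem relabel_cycle_of_max (hT : IsStandardTuple k S T) {a : ℕ} (ha : 1 ≤ a)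
    (hin : a + 2 ≤ (tupleCells k S).card) {xa xb xc : Fin k × ℕ × ℕ}
    (hxa : xa ∈ tupleCells k S) (hxb : xb ∈ tupleCells k S) (hxc : xc ∈ tupleCells k S)
    (hTa : T xa = a) (hTb : T xb = a + 1) (hTc : T xc = a + 2) {u v : ℕ}
    (huv : u = a ∧ v = a + 2 ∧ shiftedContent k xa < shiftedContent k xc ∨
      u = a + 2 ∧ v = a ∧ shiftedContent k xc < shiftedContent k xa)
    (hmax : shiftedContent k xa < shiftedContent k xb ∧
      shiftedContent k xc < shiftedContent k xb)
    (hclose : shiftedContent k xb - shiftedContent k xa ≤ k ∧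
      shiftedContent k xb - shiftedContent k xc ≤ k) :
    IsStandardTuple k S (fun x => if T x = u then a + 1 else if T x = v then u
        else if T x = a + 1 then v else T x) ∧
      dDesSet k S (fun x => if T x = u then a + 1 else if T x = v then u
        else if T x = a + 1 then v else T x) = dDesSet k S T := by
  rcases huv with ⟨hu, hv, hac⟩ | ⟨hu, hv, hac⟩ <;> subst u v <;>
  refine hT.relabel_three ha hin hxa hxb hxc hTa hTb hTc
    (fun t => if t = _ then a + 1 else if t = _ then _ else if t = a + 1 then _ else t)
    (fun t ht => ?_) (fun t h h' => ?_) ?_ (fun h => ?_) (fun h => ?_) (fun h => ?_) <;>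
  (try rw [abs_eq (by positivity)] at h) <;>
  split_ifs <;> omega

end IsStandardTuple

end

/-- for a `k`-tuple of skew shapes `μ` and a standard filling
`T`, the combined involution `D_i` produces again a standard filling of `μ`
and preserves the diagonal descent set: `dDes(D_i(T)) = dDes(T)`. -/
theorem Dmove_dDes (k : ℕ) [NeZero k] (S : Fin k → Finset (ℕ × ℕ))
    (hS : ∀ j, IsSkewShape (S j)) (T : Fin k × ℕ × ℕ → ℕ)
    (hT : IsStandardTuple k S T) (i : ℕ) (hi : 1 < i)
    (hin : i < (tupleCells k S).card) :
    IsStandardTuple k S (Dmove k i T) ∧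
      dDesSet k S (Dmove k i T) = dDesSet k S T := by
  -- `i = a + 1` keeps the truncated `i - 1` out of the arithmetic.
  obtain ⟨a, rfl⟩ : ∃ a, i = a + 1 := ⟨i - 1, by omega⟩
  obtain ⟨hxa, hTa⟩ := hT.tupleCellOf_spec (v := a) ⟨by omega, by omega⟩
  obtain ⟨hxb, hTb⟩ := hT.tupleCellOf_spec (v := a + 1) ⟨by omega, by omega⟩
  obtain ⟨hxc, hTc⟩ := hT.tupleCellOf_spec (v := a + 1 + 1) ⟨by omega, by omega⟩
  simp only [Dmove, Nat.add_sub_cancel]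
  generalize tupleCellOf k T a = xa at *
  generalize tupleCellOf k T (a + 1) = xb at *
  generalize tupleCellOf k T (a + 1 + 1) = xc at *
  have hab := hT.shiftedContent_ne_of_le_add_two hS hxa hxb (by omega) (by omega)
  have hbc := hT.shiftedContent_ne_of_le_add_two hS hxb hxc (by omega) (by omega)
  have hac := hT.shiftedContent_ne_of_le_add_two hS hxa hxc (by omega) (by omega)
  simp only [tupleRlt_iff_of_ne hab, tupleRlt_iff_of_ne hbc, tupleRlt_iff_of_ne hac,
    tupleRlt_iff_of_ne hab.symm, tupleRlt_iff_of_ne hbc.symm]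
  split
  · exact ⟨hT, rfl⟩
  split
  next hmono hfar =>
    simp only [lt_max_iff, lt_abs] at hfar
    exact hT.relabel_swap (by omega) hin hxa hxb hxc hTa hTb hTc
      (by split_ifs <;> simp only [ne_eq, abs_eq (Int.natCast_nonneg k), true_and] <;> omega)
  next hmono hfar =>
    simp only [not_lt, max_le_iff, abs_le] at hfar
    split
    next hmin =>
      exact hT.relabel_cycle_of_min (by omega) hin hxa hxb hxc hTa hTb hTc
        (by split_ifs <;> omega) hmin (by omega)
    next hmin =>
      exact hT.relabel_cycle_of_max (by omega) hin hxa hxb hxc hTa hTb hTc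
        (by split_ifs <;> omega) (by omega) (by omega)
end

section
/- The twisted dual equivalence move d̃_i preserves the number of inversions of a permutation: inv(d̃_i(w)) = inv(w) for all permutations w of {1,...,n} and all 1 < i < n. -/
/-- The number of inversions of a permutation of `Fin n`. -/
def linv (n : ℕ) (w : Equiv.Perm (Fin n)) : ℕ :=
  ((Finset.univ : Finset (Fin n × Fin n)).filter
    (fun pq => pq.1 < pq.2 ∧ w pq.2 < w pq.1)).card

/-! The move `d̃_i` multiplies `w` on the left by a 3-cycle of the consecutive values
`i-1, i, i+1`. These values form an interval, so every other value compares with all three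
in the same way, and only the inversions among the three values themselves can change. In
the one-line word those values read `i u v` and become `u v i`, or the other way round: `i`
is carried past one smaller and one larger value, which leaves their inversion count as it
was. -/

open Finset Equiv

theorem Set.OrdConnected.lt_iff_lt_of_notMem {α : Type*} [LinearOrder α] {s : Set α}
    (hs : s.OrdConnected) {x y z : α} (hx : x ∉ s) (hy : y ∈ s) (hz : z ∈ s) :
    x < y ↔ x < z := by
  have key : ∀ {y z}, y ∈ s → z ∈ s → x < y → x < z := fun hy hz hxy =>
    lt_of_not_ge fun hzx => hx (hs.out hz hy ⟨hzx, hxy.le⟩)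
  exact ⟨key hy hz, key hz hy⟩

theorem Fin.ordConnected_triple {n : ℕ} {a b c : Fin n} (hab : (a : ℕ) + 1 = b)
    (hbc : (b : ℕ) + 1 = c) : ((({a, b, c} : Finset (Fin n))) : Set (Fin n)).OrdConnected := by
  convert Set.ordConnected_Icc (a := a) (b := c)
  ext x
  simp only [coe_insert, coe_singleton, Set.mem_insert_iff, Set.mem_singleton_iff,
    Set.mem_Icc, Fin.ext_iff, Fin.le_def]
  omega

namespace Equiv.Perm

variable {α : Type*} [DecidableEq α] [Fintype α] {π : Perm α} {s : Finset α}

theorem support_swap_subset {x y : α} (hx : x ∈ s) (hy : y ∈ s) : (swap x y).support ⊆ s :=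
  fun p hp => by
    obtain ⟨-, rfl | rfl⟩ := swap_apply_ne_self_iff.1 (mem_support.1 hp) <;> assumption

theorem support_swap_mul_swap_subset {x y z : α} (hx : x ∈ s) (hy : y ∈ s) (hz : z ∈ s) :
    (swap x y * swap y z).support ⊆ s :=
  (support_mul_le _ _).trans (sup_le (support_swap_subset hx hy) (support_swap_subset hy hz))

theorem apply_mem_iff_of_support_subset (hπ : π.support ⊆ s) (x : α) : π x ∈ s ↔ x ∈ s := by
  by_cases hx : x ∈ π.support
  · exact iff_of_true (hπ (apply_mem_support.2 hx)) (hπ hx)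
  · rw [notMem_support.1 hx]

theorem apply_lt_apply_iff_of_support_subset [LinearOrder α] (hs : (s : Set α).OrdConnected)
    (hπ : π.support ⊆ s) {x y : α} (hxy : ¬(x ∈ s ∧ y ∈ s)) : π x < π y ↔ x < y := by
  have hfix : ∀ z ∉ s, π z = z := fun z hz => notMem_support.1 fun h => hz (hπ h)
  by_cases hx : x ∈ s <;> by_cases hy : y ∈ s
  · exact absurd ⟨hx, hy⟩ hxy
  · have hπx : π x ∈ s := (apply_mem_iff_of_support_subset hπ x).2 hx
    rw [hfix y hy, lt_iff_not_ge, lt_iff_not_ge (a := x),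
      (ne_of_mem_of_not_mem hπx hy).symm.le_iff_lt, (ne_of_mem_of_not_mem hx hy).symm.le_iff_lt,
      hs.lt_iff_lt_of_notMem hy hπx hx]
  · rw [hfix x hx, hs.lt_iff_lt_of_notMem hx ((apply_mem_iff_of_support_subset hπ y).2 hy) hy]
  · rw [hfix x hx, hfix y hy]

end Equiv.Perm

variable {n : ℕ}

def linvOn (w : Perm (Fin n)) (s : Finset (Fin n)) : ℕ :=
  #{xy ∈ s ×ˢ s | xy.1 < xy.2 ∧ w.symm xy.2 < w.symm xy.1}

theorem linv_eq_linvOn_add (w : Perm (Fin n)) (s : Finset (Fin n)) :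
    linv n w = linvOn w s +
      #{pq : Fin n × Fin n | (pq.1 < pq.2 ∧ w pq.2 < w pq.1) ∧ ¬(w pq.1 ∈ s ∧ w pq.2 ∈ s)} := by
  rw [linv, ← card_filter_add_card_filter_not (fun pq : Fin n × Fin n => w pq.1 ∈ s ∧ w pq.2 ∈ s),
    filter_filter, filter_filter, linvOn]
  congr 1
  refine card_nbij' (fun pq => (w pq.2, w pq.1)) (fun xy => (w.symm xy.2, w.symm xy.1))
    ?_ ?_ (fun _ _ => by simp) (fun _ _ => by simp)
  · rintro ⟨p, q⟩
    simp +contextual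
  · rintro ⟨x, y⟩
    simp +contextual

theorem linv_mul_eq_of_linvOn_eq {π : Perm (Fin n)} {s : Finset (Fin n)}
    (hs : (s : Set (Fin n)).OrdConnected) (hπ : π.support ⊆ s) (w : Perm (Fin n))
    (h : linvOn (π * w) s = linvOn w s) : linv n (π * w) = linv n w := by
  rw [linv_eq_linvOn_add (π * w) s, linv_eq_linvOn_add w s, h, add_right_inj]
  refine congrArg card (filter_congr fun pq _ => ?_)
  simp only [Perm.mul_apply, Perm.apply_mem_iff_of_support_subset hπ]
  by_cases hin : w pq.1 ∈ s ∧ w pq.2 ∈ s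
  · simp only [hin, and_self, not_true_eq_false, and_false]
  · rw [Perm.apply_lt_apply_iff_of_support_subset hs hπ (by tauto)]

theorem linvOn_triple (w : Perm (Fin n)) {a b c : Fin n} (hab : a < b) (hbc : b < c) :
    linvOn w {a, b, c} = (if w.symm b < w.symm a then 1 else 0) +
      (if w.symm c < w.symm a then 1 else 0) + (if w.symm c < w.symm b then 1 else 0) := by
  have hac := hab.trans hbc
  rw [linvOn, card_filter, sum_product]
  simp only [sum_insert (show a ∉ ({b, c} : Finset _) by simp [hab.ne, hac.ne]),
    sum_insert (show b ∉ ({c} : Finset _) by simp [hbc.ne]), sum_singleton, lt_irrefl, hab, hbc,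
    hac, hab.not_gt, hbc.not_gt, hac.not_gt, true_and, false_and, if_false]
  omega

/-- the twisted dual equivalence move `d̃_i` preserves the
number of inversions of a permutation. -/
theorem dtmove_inv (n i : ℕ) (hi : 1 ≤ i) (hin : i + 1 < n)
    (w : Equiv.Perm (Fin n)) : linv n (dtmove n i w) = linv n w := by
  rw [dtmove, dif_pos ⟨hi, hin⟩]
  dsimp only
  set a : Fin n := ⟨i - 1, by omega⟩
  set b : Fin n := ⟨i, by omega⟩
  set c : Fin n := ⟨i + 1, by omega⟩
  have hab : a < b := Fin.mk_lt_mk.2 (by omega)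
  have hbc : b < c := Fin.mk_lt_mk.2 (by omega)
  have hac := hab.trans hbc
  have hs := Fin.ordConnected_triple (a := a) (b := b) (c := c) (by simp [a, b]; omega) rfl
  have hpab : w.symm a ≠ w.symm b := w.symm.injective.ne hab.ne
  have hpbc : w.symm b ≠ w.symm c := w.symm.injective.ne hbc.ne
  have hpac : w.symm a ≠ w.symm c := w.symm.injective.ne hac.ne
  split_ifs with hmid hfirst hord hord
  · rfl
  all_goals
    refine linv_mul_eq_of_linvOn_eq hs (Perm.support_swap_mul_swap_subset (by simp) (by simp)
      (by simp)) w ?_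
    rw [linvOn_triple _ hab hbc, linvOn_triple _ hab hbc]
    simp only [← Perm.inv_def, mul_inv_rev, swap_inv, Perm.mul_apply, swap_apply_left,
      swap_apply_right, swap_apply_of_ne_of_ne, hab.ne, hbc.ne, hac.ne, hab.ne', hbc.ne',
      hac.ne', ne_eq, not_false_eq_true]
    simp only [Perm.inv_def]
    split_ifs <;> omega
end
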